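/- arXiv:1803.03358 — 3 statements merged into one kernel-verified Lean document; each statement's English description precedes it below -/
import Mathlib

section
/- Let (E+, E−) be a minimum solution to a reduced yes-instance (G, k) of the diamond-free editing problem, and let K be a maximal clique of G containing both ends of some edge in E−. Then either K is a small type-I maximal clique of G, or K is a type-II maximal clique of G and there exists a small type-I maximal clique K' of G with K ∩ K' ≠ ∅. -/
variable {V : Type*}

/-- An induced diamond on vertices `u v x y`: all five edges present except `xy`;
`uv` is the cross edge and `xy` the missing edge. -/
def IsDiamond (G : SimpleGraph V) (u v x y : V) : Prop :=
  u ≠ v ∧ u ≠ x ∧ u ≠ y ∧ v ≠ x ∧ v ≠ y ∧ x ≠ y ∧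
  G.Adj u v ∧ G.Adj u x ∧ G.Adj u y ∧ G.Adj v x ∧ G.Adj v y ∧ ¬ G.Adj x y

def DiamondFree (G : SimpleGraph V) : Prop :=
  ∀ u v x y : V, ¬ IsDiamond G u v x y

/-- The graph `G △ E±` obtained from `G` by adding the edges of `Ep` and
deleting the edges of `Em`. -/
def EditedGraph (G : SimpleGraph V) (Ep Em : Finset (Sym2 V)) : SimpleGraph V :=
  SimpleGraph.fromEdgeSet ((G.edgeSet ∪ ↑Ep) \ ↑Em)

/-- `(Ep, Em)` is a solution of the instance `(G, k)` of diamond-free editing: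
`Ep` is a set of non-edges of `G`, `Em` a set of edges of `G`,
`|Ep| + |Em| ≤ k`, and the edited graph is diamond-free. -/
def IsSolution (G : SimpleGraph V) (k : ℕ) (Ep Em : Finset (Sym2 V)) : Prop :=
  (∀ e ∈ Ep, e ∉ G.edgeSet ∧ ¬ e.IsDiag) ∧
  (∀ e ∈ Em, e ∈ G.edgeSet) ∧
  Ep.card + Em.card ≤ k ∧
  DiamondFree (EditedGraph G Ep Em)

def YesInstance (G : SimpleGraph V) (k : ℕ) : Prop :=
  ∃ Ep Em : Finset (Sym2 V), IsSolution G k Ep Em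

/-- A minimum solution: a solution such that no valid edit set of strictly
smaller total size makes the graph diamond-free. -/
def IsMinSolution (G : SimpleGraph V) (k : ℕ) (Ep Em : Finset (Sym2 V)) : Prop :=
  IsSolution G k Ep Em ∧
  ∀ Ep' Em' : Finset (Sym2 V),
    (∀ e ∈ Ep', e ∉ G.edgeSet ∧ ¬ e.IsDiag) →
    (∀ e ∈ Em', e ∈ G.edgeSet) →
    DiamondFree (EditedGraph G Ep' Em') →
    Ep.card + Em.card ≤ Ep'.card + Em'.card

/-- There are `2k+2` distinct vertices `x 0, y 0, …, x k, y k` in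
`N(u) ∩ N(v)` with each `x i y i` an edge of `G`. -/
def EdgePairedWitness (G : SimpleGraph V) (k : ℕ) (u v : V) : Prop :=
  ∃ x y : Fin (k + 1) → V,
    Function.Injective (Sum.elim x y) ∧
    (∀ i, G.Adj u (x i) ∧ G.Adj v (x i) ∧ G.Adj u (y i) ∧ G.Adj v (y i)) ∧
    (∀ i, G.Adj (x i) (y i))

/-- There are `2k+2` distinct vertices `x 0, y 0, …, x k, y k` in
`N(u) ∩ N(v)` with each `x i y i` a non-edge of `G`. -/
def NonEdgePairedWitness (G : SimpleGraph V) (k : ℕ) (u v : V) : Prop :=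
  ∃ x y : Fin (k + 1) → V,
    Function.Injective (Sum.elim x y) ∧
    (∀ i, G.Adj u (x i) ∧ G.Adj v (x i) ∧ G.Adj u (y i) ∧ G.Adj v (y i)) ∧
    (∀ i, ¬ G.Adj (x i) (y i))

/-- The instance `(G, k)` is reduced: neither sunflower rule applies. -/
def Reduced (G : SimpleGraph V) (k : ℕ) : Prop :=
  (∀ u v : V, u ≠ v → ¬ G.Adj u v → ¬ EdgePairedWitness G k u v) ∧
  (∀ u v : V, G.Adj u v → ¬ NonEdgePairedWitness G k u v)

/-- `K` is a maximal clique of `G`. -/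
def IsMaxClique (G : SimpleGraph V) (K : Finset V) : Prop :=
  G.IsClique (↑K : Set V) ∧
  ∀ K' : Finset V, G.IsClique (↑K' : Set V) → K ⊆ K' → K = K'

/-- `K` is a type-I maximal clique: it shares at least two vertices with some
other maximal clique. -/
def TypeI [DecidableEq V] (G : SimpleGraph V) (K : Finset V) : Prop :=
  IsMaxClique G K ∧
  ∃ K' : Finset V, IsMaxClique G K' ∧ K' ≠ K ∧ 2 ≤ (K ∩ K').card

/-- `K` is a type-II maximal clique: it shares at most one vertex with every
other maximal clique. -/
def TypeII [DecidableEq V] (G : SimpleGraph V) (K : Finset V) : Prop :=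
  IsMaxClique G K ∧
  ∀ K' : Finset V, IsMaxClique G K' → K' ≠ K → (K ∩ K').card ≤ 1

/-- A small (fewer than `3k+2` vertices) type-I maximal clique. -/
def SmallTypeI [DecidableEq V] (G : SimpleGraph V) (k : ℕ) (K : Finset V) : Prop :=
  TypeI G K ∧ K.card < 3 * k + 2

/-- `S(G)`: the union of all small type-I maximal cliques of `G`. -/
def SG [DecidableEq V] (G : SimpleGraph V) (k : ℕ) : Set V :=
  {v | ∃ K : Finset V, SmallTypeI G k K ∧ v ∈ K}

/-- A vulnerable vertex: it is in a small type-I maximal clique, or in a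
type-II maximal clique intersecting a small type-I maximal clique. -/
def Vulnerable [DecidableEq V] (G : SimpleGraph V) (k : ℕ) (v : V) : Prop :=
  (∃ K : Finset V, SmallTypeI G k K ∧ v ∈ K) ∨
  (∃ K1 K2 : Finset V, SmallTypeI G k K1 ∧ TypeII G K2 ∧
    (K1 ∩ K2).Nonempty ∧ v ∈ K2)

/-!
A deleted edge `uv` inside `K` makes `K` small: the at most `k` edits touch at most `2k`
vertices, and two untouched vertices of `K` would form a diamond with `u` and `v`. So let `K` be
of type II, hence closed under common neighbours, and suppose it meets no small type-I clique.
If no added edge touches `K`, restoring the deleted edges inside `K` gives a cheaper solution.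
It remains to see that an endpoint `x` of an added edge `xy` lies in a small type-I clique.

Let `C` be the maximal clique through `xy` of the edited graph, `Z` the vertices of `C` joined
to `x` by an added edge and `W` the other vertices of `C - x`. Cutting `x` off `C` shows
`|Z| ≤ |W|`. A clique of `G` through `x` and some `w ∈ W` is small by rule (a). If all the
maximal ones were of type II, `G` on `{x} ∪ W` would be a bouquet of cliques through `x`,
each vertex of `Z` seeing at most one vertex of each; replacing the edited graph on `C` by `G`
minus its edges inside `Z` would then undo more added edges than it deletes.
-/

open Finset

section DiamondFree

variable {G H H' : SimpleGraph V}

theorem editedGraph_adj {Ep Em : Finset (Sym2 V)} {a b : V} :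
    (EditedGraph G Ep Em).Adj a b ↔ a ≠ b ∧ (G.Adj a b ∨ s(a, b) ∈ Ep) ∧ s(a, b) ∉ Em := by
  simp only [EditedGraph, SimpleGraph.fromEdgeSet_adj, Set.mem_sdiff, Set.mem_union,
    SimpleGraph.mem_edgeSet, mem_coe]
  tauto

theorem DiamondFree.adj_of_adj (hH : DiamondFree H) {a b c d : V} (hab : H.Adj a b)
    (hac : H.Adj a c) (had : H.Adj a d) (hbc : H.Adj b c) (hbd : H.Adj b d) (hcd : c ≠ d) :
    H.Adj c d :=
  not_not.1 fun h => hH a b c d ⟨hab.ne, hac.ne, had.ne, hbc.ne, hbd.ne, hcd, hab, hac, had,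
    hbc, hbd, h⟩

def CommonNbrClosed (G : SimpleGraph V) (C : Set V) : Prop :=
  ∀ ⦃a b c : V⦄, a ∈ C → b ∈ C → a ≠ b → G.Adj a c → G.Adj b c → c ∈ C

/-- A triangle of `H'` with two vertices in `C` lies in `C`, so a diamond of `H'` either lies in
`C` or has no pair of vertices in `C`, and is then a diamond of `H`. -/
theorem DiamondFree.of_agree (hH : DiamondFree H) {C : Set V} (hC : CommonNbrClosed H C)
    (hagree : ∀ a b, ¬(a ∈ C ∧ b ∈ C) → (H'.Adj a b ↔ H.Adj a b))
    (hin : ∀ a ∈ C, ∀ b ∈ C, ∀ c ∈ C, ∀ d ∈ C, ¬ IsDiamond H' a b c d) : DiamondFree H' := by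
  have hC' : CommonNbrClosed H' C := fun a b c ha hb hab hac hbc => by
    by_contra hc
    exact hc (hC ha hb hab ((hagree a c fun h => hc h.2).1 hac)
      ((hagree b c fun h => hc h.2).1 hbc))
  rintro a b c d ⟨nab, nac, nad, nbc, nbd, ncd, Aab, Aac, Aad, Abc, Abd, Ncd⟩
  by_cases hall : a ∈ C ∧ b ∈ C ∧ c ∈ C ∧ d ∈ C
  · exact hin a hall.1 b hall.2.1 c hall.2.2.1 d hall.2.2.2
      ⟨nab, nac, nad, nbc, nbd, ncd, Aab, Aac, Aad, Abc, Abd, Ncd⟩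
  have hab : ¬(a ∈ C ∧ b ∈ C) := fun h =>
    hall ⟨h.1, h.2, hC' h.1 h.2 nab Aac Abc, hC' h.1 h.2 nab Aad Abd⟩
  have hac : ¬(a ∈ C ∧ c ∈ C) := fun h => hab ⟨h.1, hC' h.1 h.2 nac Aab Abc.symm⟩
  have had : ¬(a ∈ C ∧ d ∈ C) := fun h => hab ⟨h.1, hC' h.1 h.2 nad Aab Abd.symm⟩
  have hbc : ¬(b ∈ C ∧ c ∈ C) := fun h => hab ⟨hC' h.1 h.2 nbc Aab.symm Aac.symm, h.1⟩
  have hbd : ¬(b ∈ C ∧ d ∈ C) := fun h => hab ⟨hC' h.1 h.2 nbd Aab.symm Aad.symm, h.1⟩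
  have hcd : ¬(c ∈ C ∧ d ∈ C) := fun h => hac ⟨hC' h.1 h.2 ncd Aac.symm Aad.symm, h.1⟩
  exact hH a b c d ⟨nab, nac, nad, nbc, nbd, ncd, (hagree _ _ hab).1 Aab, (hagree _ _ hac).1 Aac,
    (hagree _ _ had).1 Aad, (hagree _ _ hbc).1 Abc, (hagree _ _ hbd).1 Abd,
    fun h => Ncd ((hagree _ _ hcd).2 h)⟩

end DiamondFree

section MaxClique

variable {G : SimpleGraph V}

theorem IsMaxClique.mem_of_forall_adj [DecidableEq V] {K : Finset V} (hK : IsMaxClique G K)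
    {c : V} (hc : ∀ d ∈ K, c ≠ d → G.Adj c d) : c ∈ K := by
  have := hK.2 (insert c K) (by rw [coe_insert]; exact SimpleGraph.isClique_insert.2 ⟨hK.1, hc⟩)
    (subset_insert c K)
  exact this ▸ mem_insert_self c K

theorem DiamondFree.commonNbrClosed [DecidableEq V] (hG : DiamondFree G) {K : Finset V}
    (hK : IsMaxClique G K) : CommonNbrClosed G K := by
  intro a b c ha hb hab hac hbc
  refine hK.mem_of_forall_adj fun d hd hcd => ?_
  by_cases hda : d = a
  · exact hda ▸ hac.symm
  by_cases hdb : d = b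
  · exact hdb ▸ hbc.symm
  exact hG.adj_of_adj (hK.1 ha hb hab) hac (hK.1 ha hd (Ne.symm hda)) hbc
    (hK.1 hb hd (Ne.symm hdb)) hcd

theorem typeI_or_typeII [DecidableEq V] {K : Finset V} (hK : IsMaxClique G K) :
    TypeI G K ∨ TypeII G K := by
  refine (em _).imp (fun h => ⟨hK, h⟩) fun h => ⟨hK, fun K' hK' hne => ?_⟩
  by_contra! h'
  exact h ⟨K', hK', hne, h'⟩

variable [Fintype V]

theorem exists_isMaxClique_superset {C : Finset V} (hC : G.IsClique (C : Set V)) :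
    ∃ K : Finset V, IsMaxClique G K ∧ C ⊆ K := by
  obtain ⟨K, hCK, hK⟩ := (Set.toFinite {K : Finset V | G.IsClique (K : Set V)}).exists_le_maximal hC
  exact ⟨K, ⟨hK.prop, fun K' hK' hKK' => le_antisymm hKK' (hK.2 hK' hKK')⟩, hCK⟩

theorem exists_isMaxClique_of_adj {a b : V} (hab : G.Adj a b) :
    ∃ K : Finset V, IsMaxClique G K ∧ a ∈ K ∧ b ∈ K := by
  classical
  obtain ⟨K, hK, hsub⟩ := exists_isMaxClique_superset (C := {a, b}) (by
    rw [coe_pair]; exact SimpleGraph.isClique_pair.2 fun _ => hab)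
  exact ⟨K, hK, hsub (by simp), hsub (by simp)⟩

theorem TypeII.commonNbrClosed [DecidableEq V] {K : Finset V} (hK : TypeII G K) :
    CommonNbrClosed G K := by
  intro a b c ha hb hab hac hbc
  by_contra hc
  have htri : G.IsClique ((({a, b, c} : Finset V)) : Set V) := by
    simp only [coe_insert, coe_singleton]
    refine SimpleGraph.isClique_insert.2 ⟨SimpleGraph.isClique_pair.2 fun _ => hbc, ?_⟩
    rintro d (rfl | rfl) hne
    exacts [hK.1.1 ha hb hab, hac]
  obtain ⟨L, hL, hsub⟩ := exists_isMaxClique_superset htri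
  have hpair : {a, b} ⊆ K ∩ L := by
    intro d hd
    simp only [mem_insert, mem_singleton] at hd
    rcases hd with rfl | rfl <;> exact mem_inter.2 ⟨‹_›, hsub (by simp)⟩
  have := hK.2 L hL (fun h => hc (h ▸ hsub (by simp)))
  have := card_le_card hpair
  rw [card_pair hab] at this
  omega

end MaxClique

section Solution

variable {G : SimpleGraph V} {k : ℕ} {Ep Em : Finset (Sym2 V)}

theorem IsSolution.diamondFree (h : IsSolution G k Ep Em) : DiamondFree (EditedGraph G Ep Em) :=
  h.2.2.2

theorem IsSolution.not_adj_of_mem_added (h : IsSolution G k Ep Em) {a b : V}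
    (hab : s(a, b) ∈ Ep) : ¬ G.Adj a b :=
  (h.1 _ hab).1

theorem IsSolution.adj_of_mem_added (h : IsSolution G k Ep Em) {a b : V} (hab : s(a, b) ∈ Ep) :
    (EditedGraph G Ep Em).Adj a b :=
  editedGraph_adj.2 ⟨fun he => (h.1 _ hab).2 (Sym2.mk_isDiag_iff.2 he), Or.inr hab,
    fun hm => (h.1 _ hab).1 (h.2.1 _ hm)⟩

theorem IsSolution.adj_of_mem_deleted (h : IsSolution G k Ep Em) {a b : V} (hab : s(a, b) ∈ Em) :
    G.Adj a b :=
  h.2.1 _ hab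

/-- The edits touch at most `2k` vertices, and two untouched vertices of `K` would form a diamond
with `u` and `v`. -/
theorem IsSolution.card_le_of_mem_deleted [DecidableEq V] (h : IsSolution G k Ep Em) {u v : V}
    (huv : s(u, v) ∈ Em) {K : Finset V} (hK : G.IsClique (K : Set V)) (hu : u ∈ K) (hv : v ∈ K) :
    #K ≤ 2 * k + 1 := by
  set T := (Ep ∪ Em).biUnion Sym2.toFinset
  have hT : #T ≤ 2 * k := by
    have := card_union_le Ep Em
    have : #T ≤ #(Ep ∪ Em) * 2 := card_biUnion_le_card_mul _ _ 2 fun e _ => by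
      rw [Sym2.card_toFinset]; split_ifs <;> omega
    have := h.2.2.1
    omega
  have hmemT : ∀ {a b}, s(a, b) ∈ Em → a ∈ T := fun hab =>
    mem_biUnion.2 ⟨_, mem_union_right _ hab, by simp⟩
  have hkeep : ∀ w ∈ K \ T, ∀ t ∈ K, w ≠ t → (EditedGraph G Ep Em).Adj w t := fun w hw t ht hwt =>
    editedGraph_adj.2 ⟨hwt, Or.inl (hK (mem_sdiff.1 hw).1 ht hwt),
      fun hm => (mem_sdiff.1 hw).2 (hmemT hm)⟩
  have hne : ∀ w ∈ K \ T, w ≠ u ∧ w ≠ v := fun w hw =>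
    ⟨fun h => (mem_sdiff.1 hw).2 (h ▸ hmemT huv),
      fun h => (mem_sdiff.1 hw).2 (h ▸ hmemT (Sym2.eq_swap ▸ huv))⟩
  have hone : #(K \ T) ≤ 1 := card_le_one.2 fun w₁ h₁ w₂ h₂ => by
    by_contra hw
    exact h.diamondFree w₁ w₂ u v ⟨hw, (hne w₁ h₁).1, (hne w₁ h₁).2, (hne w₂ h₂).1,
      (hne w₂ h₂).2, (h.adj_of_mem_deleted huv).ne, hkeep w₁ h₁ w₂ (mem_sdiff.1 h₂).1 hw,
      hkeep w₁ h₁ u hu (hne w₁ h₁).1, hkeep w₁ h₁ v hv (hne w₁ h₁).2,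
      hkeep w₂ h₂ u hu (hne w₂ h₂).1, hkeep w₂ h₂ v hv (hne w₂ h₂).2,
      fun hA => (editedGraph_adj.1 hA).2.2 huv⟩
  have := card_le_card_sdiff_add_card (s := K) (t := T)
  omega

theorem IsMinSolution.card_add_card_le_card [DecidableEq V] (hmin : IsMinSolution G k Ep Em)
    {A A' B : Finset (Sym2 V)} (hA : A ⊆ Ep) (hA' : A' ⊆ Em) (hB : ∀ e ∈ B, e ∈ G.edgeSet)
    (hdf : DiamondFree (EditedGraph G (Ep \ A) (Em \ A' ∪ B))) : #A + #A' ≤ #B := by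
  have := hmin.2 (Ep \ A) (Em \ A' ∪ B) (fun e he => hmin.1.1 e (mem_sdiff.1 he).1)
    (fun e he => (mem_union.1 he).elim (fun he => hmin.1.2.1 e (mem_sdiff.1 he).1) (hB e)) hdf
  have := card_union_le (Em \ A') B
  rw [card_sdiff_of_subset hA] at *
  rw [card_sdiff_of_subset hA'] at *
  have := card_le_card hA
  have := card_le_card hA'
  omega

theorem IsMinSolution.card_add_card_le_card_of_commonNbrClosed [DecidableEq V]
    (hmin : IsMinSolution G k Ep Em) {C : Finset V}
    (hC : CommonNbrClosed (EditedGraph G Ep Em) C) {A A' B : Finset (Sym2 V)}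
    (hA : A ⊆ Ep ∩ C.sym2) (hA' : A' ⊆ Em ∩ C.sym2) (hB : ∀ e ∈ B, e ∈ G.edgeSet ∧ e ∈ C.sym2)
    (hin : ∀ a ∈ C, ∀ b ∈ C, ∀ c ∈ C, ∀ d ∈ C,
      ¬ IsDiamond (EditedGraph G (Ep \ A) (Em \ A' ∪ B)) a b c d) :
    #A + #A' ≤ #B := by
  refine hmin.card_add_card_le_card (hA.trans inter_subset_left) (hA'.trans inter_subset_left)
    (fun e he => (hB e he).1) (hmin.1.diamondFree.of_agree hC (fun a b hab => ?_) hin)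
  have hout : s(a, b) ∉ C.sym2 := by rwa [mk_mem_sym2_iff]
  have h₁ : s(a, b) ∉ A := fun h => hout (mem_inter.1 (hA h)).2
  have h₂ : s(a, b) ∉ A' := fun h => hout (mem_inter.1 (hA' h)).2
  have h₃ : s(a, b) ∉ B := fun h => hout (hB _ h).2
  simp only [editedGraph_adj, mem_sdiff, mem_union, h₁, h₂, h₃, not_false_eq_true, and_true,
    or_false]

end Solution

section ReductionRule

variable {G : SimpleGraph V} {k : ℕ}

theorem edgePairedWitness_of_isClique {u v : V} {S : Finset V} (hS : G.IsClique (S : Set V))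
    (hcard : 2 * k + 2 ≤ #S) (hu : ∀ c ∈ S, G.Adj u c) (hv : ∀ c ∈ S, G.Adj v c) :
    EdgePairedWitness G k u v := by
  obtain ⟨f⟩ : Nonempty (Fin (k + 1) ⊕ Fin (k + 1) ↪ S) :=
    Function.Embedding.nonempty_of_card_le (by simp; omega)
  have hinj : Function.Injective fun i => (f i : V) := Subtype.val_injective.comp f.injective
  refine ⟨fun i => f (.inl i), fun i => f (.inr i), ?_,
    fun i => ⟨hu _ (f _).2, hv _ (f _).2, hu _ (f _).2, hv _ (f _).2⟩,
    fun i => hS (f _).2 (f _).2 fun h => Sum.inl_ne_inr (hinj h)⟩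
  convert hinj using 1
  funext i
  cases i <;> rfl

/-- Two vertices charged to the same edge are each other's partners, hence both lie in `T`. -/
theorem card_le_card_of_forall_exists_mk_mem {S : Finset V} {T : Set V} {E : Finset (Sym2 V)}
    (hST : ∀ a ∈ S, ∀ b ∈ S, a ∈ T → b ∈ T → a = b) (h : ∀ c ∈ S, ∃ t ∈ T, s(c, t) ∈ E) :
    #S ≤ #E := by
  choose! t ht hE using h
  refine card_le_card_of_injOn (fun c => s(c, t c)) (fun c hc => hE c hc) fun a ha b hb hab => ?_
  rcases Sym2.eq_iff.1 hab with ⟨h, -⟩ | ⟨h₁, h₂⟩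
  · exact h
  · exact hST a ha b hb (h₁ ▸ ht b hb) (h₂ ▸ ht a ha)

/-- If neither `cx` nor `cw` is deleted, then `x` and `w` are common neighbours of `c` and `y` in
the diamond-free edited graph, so `cy` is an edge there, hence an added one. -/
theorem IsSolution.exists_mem_erase_of_not_adj [DecidableEq V] {Ep Em : Finset (Sym2 V)}
    (hsol : IsSolution G k Ep Em) {x y w : V} (hxy : s(x, y) ∈ Ep) (hxw : G.Adj x w)
    (hxwEm : s(x, w) ∉ Em) (hyw : (EditedGraph G Ep Em).Adj y w) {L : Finset V}
    (hL : G.IsClique (L : Set V)) (hxL : x ∈ L) (hwL : w ∈ L) (hyL : y ∉ L) {c : V}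
    (hcL : c ∈ L) (hcx : c ≠ x) (hcy : ¬ G.Adj c y) :
    ∃ t ∈ ({x, w, y} : Set V), s(c, t) ∈ (Ep ∪ Em).erase s(x, y) := by
  have hyc : c ≠ y := fun h => hyL (h ▸ hcL)
  have hne : ∀ t, s(c, t) ≠ s(x, y) := fun t h => by
    rcases Sym2.eq_iff.1 h with ⟨h, -⟩ | ⟨h, -⟩
    exacts [hcx h, hyc h]
  by_cases h₁ : s(c, x) ∈ Em
  · exact ⟨x, by simp, mem_erase.2 ⟨hne x, mem_union_right _ h₁⟩⟩
  by_cases h₂ : s(c, w) ∈ Em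
  · exact ⟨w, by simp, mem_erase.2 ⟨hne w, mem_union_right _ h₂⟩⟩
  have hHcy : (EditedGraph G Ep Em).Adj c y := by
    by_cases hcw : c = w
    · exact hcw ▸ hyw.symm
    refine hsol.diamondFree.adj_of_adj (editedGraph_adj.2 ⟨hxw.ne, Or.inl hxw, hxwEm⟩)
      (editedGraph_adj.2 ⟨Ne.symm hcx, Or.inl (hL hxL hcL (Ne.symm hcx)), ?_⟩)
      (hsol.adj_of_mem_added hxy)
      (editedGraph_adj.2 ⟨Ne.symm hcw, Or.inl (hL hwL hcL (Ne.symm hcw)), ?_⟩) hyw.symm hyc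
    · rwa [Sym2.eq_swap]
    · rwa [Sym2.eq_swap]
  exact ⟨y, by simp, mem_erase.2 ⟨hne y,
    mem_union_left _ (((editedGraph_adj.1 hHcy).2.1).resolve_left hcy)⟩⟩

/-- The vertices of `L - x` adjacent to `y` in `G` form a clique of common neighbours of the
non-adjacent `x` and `y`, so rule (a) leaves at most `2k + 1` of them; the others are charged
injectively to the edits other than `xy`. -/
theorem Reduced.card_lt_of_mem_added [DecidableEq V] (hred : Reduced G k)
    {Ep Em : Finset (Sym2 V)} (hsol : IsSolution G k Ep Em) {x y w : V} (hxy : s(x, y) ∈ Ep)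
    (hxw : G.Adj x w) (hxwEm : s(x, w) ∉ Em) (hyw : (EditedGraph G Ep Em).Adj y w)
    {L : Finset V} (hL : G.IsClique (L : Set V)) (hxL : x ∈ L) (hwL : w ∈ L) :
    #L < 3 * k + 2 := by
  classical
  have hnxy := hsol.not_adj_of_mem_added hxy
  have hxy' := (hsol.adj_of_mem_added hxy).ne
  have hyL : y ∉ L := fun hy => hnxy (hL hxL hy hxy')
  have hgood : #((L.erase x).filter (G.Adj · y)) ≤ 2 * k + 1 := by
    by_contra! h
    refine hred.1 x y hxy' hnxy (edgePairedWitness_of_isClique (hL.subset ?_) h ?_ ?_)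
    · exact fun c hc => (mem_erase.1 (mem_filter.1 hc).1).2
    · intro c hc
      obtain ⟨hcx, hcL⟩ := mem_erase.1 (mem_filter.1 hc).1
      exact hL hxL hcL (Ne.symm hcx)
    · exact fun c hc => (mem_filter.1 hc).2.symm
  have hbad : #((L.erase x).filter (¬G.Adj · y)) ≤ #((Ep ∪ Em).erase s(x, y)) := by
    have hw : ∀ a ∈ (L.erase x).filter (¬G.Adj · y), a ∈ ({x, w, y} : Set V) → a = w := by
      intro a ha hat
      obtain ⟨hax, haL⟩ := mem_erase.1 (mem_filter.1 ha).1
      simp only [Set.mem_insert_iff, Set.mem_singleton_iff] at hat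
      rcases hat with rfl | rfl | rfl
      exacts [absurd rfl hax, rfl, absurd haL hyL]
    refine card_le_card_of_forall_exists_mk_mem
      (fun a ha b hb hat hbt => (hw a ha hat).trans (hw b hb hbt).symm) fun c hc => ?_
    obtain ⟨hcx, hcL⟩ := mem_erase.1 (mem_filter.1 hc).1
    exact hsol.exists_mem_erase_of_not_adj hxy hxw hxwEm hyw hL hxL hwL hyL hcL hcx
      (mem_filter.1 hc).2
  have hE : #((Ep ∪ Em).erase s(x, y)) + 1 ≤ k := by
    rw [card_erase_of_mem (mem_union_left _ hxy)]
    have := card_union_le Ep Em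
    have := card_pos.2 ⟨_, mem_union_left Em hxy⟩
    have := hsol.2.2.1
    omega
  have hsplit := card_filter_add_card_filter_not (s := L.erase x) (G.Adj · y)
  rw [card_erase_of_mem hxL] at hsplit
  omega

end ReductionRule

section AddedEdge

variable [DecidableEq V] {G : SimpleGraph V} {k : ℕ} {Ep Em : Finset (Sym2 V)} {C : Finset V}
  {x : V}

def addedNbrs (Ep : Finset (Sym2 V)) (C : Finset V) (x : V) : Finset V :=
  (C.erase x).filter fun c => s(x, c) ∈ Ep

def keptNbrs (Ep : Finset (Sym2 V)) (C : Finset V) (x : V) : Finset V :=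
  (C.erase x).filter fun c => s(x, c) ∉ Ep

theorem mem_addedNbrs {c : V} : c ∈ addedNbrs Ep C x ↔ c ≠ x ∧ c ∈ C ∧ s(x, c) ∈ Ep := by
  rw [addedNbrs, mem_filter, mem_erase, and_assoc]

theorem mem_keptNbrs {c : V} : c ∈ keptNbrs Ep C x ↔ c ≠ x ∧ c ∈ C ∧ s(x, c) ∉ Ep := by
  rw [keptNbrs, mem_filter, mem_erase, and_assoc]

theorem insert_addedNbrs_union_keptNbrs (hx : x ∈ C) :
    insert x (addedNbrs Ep C x ∪ keptNbrs Ep C x) = C := by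
  rw [addedNbrs, keptNbrs, filter_union_filter_not_eq, insert_erase hx]

theorem disjoint_addedNbrs_keptNbrs : Disjoint (addedNbrs Ep C x) (keptNbrs Ep C x) :=
  disjoint_filter_filter_not _ _ _

theorem self_notMem_addedNbrs : x ∉ addedNbrs Ep C x := fun h => (mem_addedNbrs.1 h).1 rfl

theorem self_notMem_keptNbrs : x ∉ keptNbrs Ep C x := fun h => (mem_keptNbrs.1 h).1 rfl

theorem IsSolution.not_adj_of_mem_addedNbrs (hsol : IsSolution G k Ep Em) {c : V}
    (hc : c ∈ addedNbrs Ep C x) : ¬ G.Adj x c :=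
  hsol.not_adj_of_mem_added (mem_addedNbrs.1 hc).2.2

theorem adj_of_mem_keptNbrs (hC : (EditedGraph G Ep Em).IsClique (C : Set V)) (hx : x ∈ C)
    {c : V} (hc : c ∈ keptNbrs Ep C x) : G.Adj x c ∧ s(x, c) ∉ Em := by
  obtain ⟨hcx, hcC, hEp⟩ := mem_keptNbrs.1 hc
  obtain ⟨-, hG, hEm⟩ := editedGraph_adj.1 (hC hx hcC (Ne.symm hcx))
  exact ⟨hG.resolve_right hEp, hEm⟩

/-- Cut `x` off the rest of `C`: inside `C`, `x` becomes isolated and `C - x` stays a clique, so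
no diamond arises. -/
theorem IsMinSolution.card_addedNbrs_le (hmin : IsMinSolution G k Ep Em)
    (hC : (EditedGraph G Ep Em).IsClique (C : Set V))
    (hcl : CommonNbrClosed (EditedGraph G Ep Em) C) (hx : x ∈ C) :
    #(addedNbrs Ep C x) ≤ #(keptNbrs Ep C x) := by
  have hinj : Function.Injective fun c => s(x, c) := fun _ _ h => Sym2.congr_right.1 h
  have hxmem : ∀ {c p q : V}, s(x, c) = s(p, q) → p = x ∨ q = x := fun h => by
    rcases Sym2.eq_iff.1 h with ⟨h, -⟩ | ⟨h, -⟩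
    exacts [Or.inl h.symm, Or.inr h.symm]
  set A := (addedNbrs Ep C x).image fun c => s(x, c)
  set B := (keptNbrs Ep C x).image fun c => s(x, c)
  have key := hmin.card_add_card_le_card_of_commonNbrClosed hcl (A := A) (A' := ∅) (B := B)
    ?_ (empty_subset _) ?_ ?_
  · rwa [card_image_of_injective _ hinj, card_image_of_injective _ hinj, card_empty,
      add_zero] at key
  · intro e he
    obtain ⟨c, hc, rfl⟩ := mem_image.1 he
    exact mem_inter.2 ⟨(mem_addedNbrs.1 hc).2.2, mk_mem_sym2_iff.2 ⟨hx, (mem_addedNbrs.1 hc).2.1⟩⟩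
  · intro e he
    obtain ⟨c, hc, rfl⟩ := mem_image.1 he
    exact ⟨(adj_of_mem_keptNbrs hC hx hc).1, mk_mem_sym2_iff.2 ⟨hx, (mem_keptNbrs.1 hc).2.1⟩⟩
  rintro a ha b hb c hc d hd ⟨-, -, -, -, -, hcd, -, hac, had, -, -, hncd⟩
  have hcut : ∀ q ∈ C, ¬ (EditedGraph G (Ep \ A) (Em \ ∅ ∪ B)).Adj x q := by
    intro q hq hxq
    obtain ⟨hne, hG, hEm⟩ := editedGraph_adj.1 hxq
    by_cases hEp : s(x, q) ∈ Ep
    · have hqA : s(x, q) ∈ A := mem_image.2 ⟨q, mem_addedNbrs.2 ⟨Ne.symm hne, hq, hEp⟩, rfl⟩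
      exact hG.elim (hmin.1.not_adj_of_mem_added hEp) fun h => (mem_sdiff.1 h).2 hqA
    · exact hEm (mem_union_right _ (mem_image.2 ⟨q, mem_keptNbrs.2 ⟨Ne.symm hne, hq, hEp⟩, rfl⟩))
  have hcx : c ≠ x := by rintro rfl; exact hcut a ha hac.symm
  have hdx : d ≠ x := by rintro rfl; exact hcut a ha had.symm
  obtain ⟨-, hG, hEm⟩ := editedGraph_adj.1 (hC hc hd hcd)
  refine hncd (editedGraph_adj.2 ⟨hcd, hG.imp id fun h => mem_sdiff.2 ⟨h, ?_⟩, ?_⟩)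
  · simp only [A, mem_image]
    rintro ⟨_, -, h⟩
    exact (hxmem h).elim hcx hdx
  · simp only [B, sdiff_empty, mem_union, mem_image, not_or]
    exact ⟨hEm, fun ⟨_, _, h⟩ => (hxmem h).elim hcx hdx⟩

end AddedEdge

section Petals

variable {G Γ : SimpleGraph V} {x : V} {Z W : Finset V}

/-- A vertex of `Z` lies in no triangle of `Γ`, so a diamond of `Γ` would live on `{x} ∪ W`,
where `x` is adjacent to everything and the neighbours of each vertex of `W` form a clique. -/
theorem not_isDiamond_of_adj_iff [DecidableEq V]
    (hΓ : ∀ p ∈ insert x (Z ∪ W), ∀ q ∈ insert x (Z ∪ W),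
      Γ.Adj p q ↔ G.Adj p q ∧ ¬(p ∈ Z ∧ q ∈ Z))
    (hxZ : ∀ ζ ∈ Z, ¬ G.Adj x ζ) (hxW : ∀ w ∈ W, G.Adj x w)
    (hW : ∀ w ∈ W, ∀ c ∈ W, ∀ d ∈ W, G.Adj w c → G.Adj w d → c ≠ d → G.Adj c d)
    (hZW : ∀ ζ ∈ Z, ∀ w ∈ W, ∀ w' ∈ W, G.Adj ζ w → G.Adj ζ w' → ¬ G.Adj w w')
    {a b c d : V} (ha : a ∈ insert x (Z ∪ W)) (hb : b ∈ insert x (Z ∪ W))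
    (hc : c ∈ insert x (Z ∪ W)) (hd : d ∈ insert x (Z ∪ W)) : ¬ IsDiamond Γ a b c d := by
  rintro ⟨nab, -, -, -, -, ncd, Aab, Aac, Aad, Abc, Abd, Ncd⟩
  have hmem : ∀ {p}, p ∈ insert x (Z ∪ W) → p = x ∨ p ∈ Z ∨ p ∈ W := by simp
  have htri : ∀ {p q r}, p ∈ insert x (Z ∪ W) → q ∈ insert x (Z ∪ W) →
      r ∈ insert x (Z ∪ W) → Γ.Adj p q → Γ.Adj p r → Γ.Adj q r → p ∉ Z := by
    intro p q r hp hq hr hpq hpr hqr hpZ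
    have hside : ∀ {t}, t ∈ insert x (Z ∪ W) → Γ.Adj p t → G.Adj p t ∧ t ∈ W := by
      intro t ht hpt
      obtain ⟨hG, hnZ⟩ := (hΓ p hp t ht).1 hpt
      rcases hmem ht with rfl | htZ | htW
      exacts [absurd hG.symm (hxZ p hpZ), absurd ⟨hpZ, htZ⟩ hnZ, ⟨hG, htW⟩]
    exact hZW p hpZ q (hside hq hpq).2 r (hside hr hpr).2 (hside hq hpq).1 (hside hr hpr).1
      ((hΓ q hq r hr).1 hqr).1
  have haZ := htri ha hb hc Aab Aac Abc
  have hbZ := htri hb ha hc Aab.symm Abc Aac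
  have hcZ := htri hc ha hb Aac.symm Abc.symm Aab
  have hdZ := htri hd ha hb Aad.symm Abd.symm Aab
  have hG : ∀ {p q}, p ∈ insert x (Z ∪ W) → q ∈ insert x (Z ∪ W) → q ∉ Z →
      (Γ.Adj p q ↔ G.Adj p q) := fun hp hq hqZ => by rw [hΓ _ hp _ hq]; tauto
  have hW' : ∀ {p}, p ∈ insert x (Z ∪ W) → p ∉ Z → p ≠ x → p ∈ W := fun hp hpZ hpx =>
    ((hmem hp).resolve_left hpx).resolve_left hpZ
  have hcx : c ≠ x := by
    rintro rfl
    by_cases hdx : d = c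
    · exact ncd hdx.symm
    · exact Ncd ((hG hc hd hdZ).2 (hxW d (hW' hd hdZ hdx)))
  have hdx : d ≠ x := by
    rintro rfl
    exact Ncd ((hG hc hd hdZ).2 ((hxW c (hW' hc hcZ hcx)).symm))
  have hcommon : ∀ {p}, p ∈ insert x (Z ∪ W) → p ∉ Z → p ≠ x → Γ.Adj p c → Γ.Adj p d → False :=
    fun hp hpZ hpx hpc hpd => Ncd ((hG hc hd hdZ).2 (hW _ (hW' hp hpZ hpx) c (hW' hc hcZ hcx) d
      (hW' hd hdZ hdx) ((hG hp hc hcZ).1 hpc) ((hG hp hd hdZ).1 hpd) ncd))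
  by_cases hax : a = x
  · exact hcommon hb hbZ (fun h => nab (hax.trans h.symm)) Abc Abd
  · exact hcommon ha haZ hax Aac Aad

theorem choose_two_lt_mul_add_choose_two {z m s : ℕ} (hz : 0 < z) (hzs : z ≤ s) (hms : m ≤ s) :
    z.choose 2 < z * (s - m + 1) + m.choose 2 := by
  have hchoose : ∀ n : ℕ, 2 * n.choose 2 + n = n * n := fun n => by
    induction n with
    | zero => simp
    | succ n ih => rw [Nat.choose_succ_succ, Nat.choose_one_right]; nlinarith
  have hz2 := hchoose z
  have hm2 := hchoose m
  obtain ⟨t, rfl⟩ := Nat.exists_eq_add_of_le hms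
  rw [Nat.add_sub_cancel_left]
  have key : 0 ≤ ((m : ℤ) - z) * ((m : ℤ) - z - 1) := by
    rcases le_or_gt (m : ℤ) z with h | h <;> nlinarith
  zify at *
  nlinarith

theorem card_mul_le_card_filter_not_adj [DecidableEq V] [DecidableRel G.Adj] {m : ℕ} (hxW : x ∉ W)
    (hZx : ∀ ζ ∈ Z, ¬ G.Adj ζ x) (hm : ∀ ζ ∈ Z, #(W.filter (G.Adj ζ)) ≤ m) :
    #Z * (#W - m + 1) ≤ #((Z ×ˢ insert x W).filter fun p => ¬ G.Adj p.1 p.2) := by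
  rw [card_filter, sum_product, ← smul_eq_mul, ← sum_const]
  refine sum_le_sum fun ζ hζ => ?_
  dsimp only
  rw [← card_filter, filter_insert, if_pos (hZx ζ hζ), card_insert_of_notMem
    (fun h => hxW (mem_filter.1 h).1)]
  have := card_filter_add_card_filter_not (s := W) (G.Adj ζ)
  have := hm ζ hζ
  omega

theorem card_sym2_filter_adj_le [DecidableEq V] [DecidableRel G.Adj] (S : Finset V) :
    #(S.sym2.filter (· ∈ G.edgeSet)) ≤ (#S).choose 2 := by
  rw [← Sym2.card_image_offDiag]
  refine card_le_card fun e he => ?_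
  induction e using Sym2.ind with
  | _ a b =>
    obtain ⟨hab, hG⟩ := mem_filter.1 he
    obtain ⟨ha, hb⟩ := mk_mem_sym2_iff.1 hab
    exact mem_image.2 ⟨(a, b), mem_offDiag.2 ⟨ha, hb, G.ne_of_adj hG⟩, rfl⟩

theorem card_filter_add_choose_two_le_card [DecidableEq V] [DecidableRel G.Adj] {Z Y R : Finset V}
    {A : Finset (Sym2 V)} (hZY : Disjoint Z Y) (hRY : R ⊆ Y) (hR : ∀ a ∈ R, ∀ b ∈ R, ¬ G.Adj a b)
    (hA : ∀ p ∈ Z ∪ Y, ∀ q ∈ Z ∪ Y, p ≠ q → ¬ G.Adj p q → s(p, q) ∈ A) :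
    #((Z ×ˢ Y).filter fun p => ¬ G.Adj p.1 p.2) + (#R).choose 2 ≤ #A := by
  set P := (Z ×ˢ Y).filter fun p => ¬ G.Adj p.1 p.2
  have hPmem : ∀ {a b}, (a, b) ∈ P → a ∈ Z ∧ b ∈ Y ∧ ¬ G.Adj a b := fun h => by
    simpa only [P, mem_filter, mem_product, and_assoc] using h
  have hPinj : Set.InjOn (fun p : V × V => s(p.1, p.2)) P := by
    rintro ⟨a, b⟩ hab ⟨c, d⟩ hcd h
    rcases Sym2.eq_iff.1 h with ⟨rfl, rfl⟩ | ⟨rfl, rfl⟩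
    exacts [rfl, absurd (hPmem hcd).2.1 (disjoint_left.1 hZY (hPmem hab).1)]
  have hPA : P.image (fun p => s(p.1, p.2)) ⊆ A := by
    rintro _ h
    obtain ⟨⟨a, b⟩, hab, rfl⟩ := mem_image.1 h
    obtain ⟨ha, hb, hnadj⟩ := hPmem hab
    exact hA a (mem_union_left Y ha) b (mem_union_right Z hb)
      (fun h => disjoint_left.1 hZY ha (h ▸ hb)) hnadj
  have hRA : R.offDiag.image (Function.uncurry Sym2.mk) ⊆ A := by
    rintro _ h
    obtain ⟨⟨a, b⟩, hab, rfl⟩ := mem_image.1 h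
    obtain ⟨ha, hb, hne⟩ := mem_offDiag.1 hab
    exact hA a (mem_union_right Z (hRY ha)) b (mem_union_right Z (hRY hb)) hne (hR a ha b hb)
  have hdisj : Disjoint (P.image fun p => s(p.1, p.2))
      (R.offDiag.image (Function.uncurry Sym2.mk)) := by
    refine disjoint_left.2 fun e h₁ h₂ => ?_
    obtain ⟨⟨a, b⟩, hab, rfl⟩ := mem_image.1 h₁
    obtain ⟨⟨c, d⟩, hcd, h⟩ := mem_image.1 h₂
    obtain ⟨hc, hd, -⟩ := mem_offDiag.1 hcd
    have ha : a ∈ R := by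
      rcases Sym2.eq_iff.1 h with ⟨rfl, -⟩ | ⟨-, rfl⟩
      exacts [hc, hd]
    exact disjoint_left.1 hZY (hPmem hab).1 (hRY ha)
  rw [← Sym2.card_image_offDiag, ← card_image_of_injOn hPinj, ← card_union_of_disjoint hdisj]
  exact card_le_card (union_subset hPA hRA)

/-- Let `m` be the largest number of neighbours in `W` of a vertex of `Z`. Each `ζ ∈ Z` misses
`x` and all but at most `m` vertices of `W`, and `m` independent neighbours of one `ζ` span
`m choose 2` further non-edges. -/
theorem choose_two_lt_card [DecidableEq V] {A : Finset (Sym2 V)} (hxZ : x ∉ Z) (hxW : x ∉ W)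
    (hZW : Disjoint Z W) (hZ : Z.Nonempty) (hcard : #Z ≤ #W) (hZx : ∀ ζ ∈ Z, ¬ G.Adj ζ x)
    (hind : ∀ ζ ∈ Z, ∀ w ∈ W, ∀ w' ∈ W, G.Adj ζ w → G.Adj ζ w' → ¬ G.Adj w w')
    (hA : ∀ p ∈ insert x (Z ∪ W), ∀ q ∈ insert x (Z ∪ W), p ≠ q → ¬ G.Adj p q → s(p, q) ∈ A) :
    (#Z).choose 2 < #A := by
  classical
  obtain ⟨ζ₀, hζ₀, hmax⟩ := Z.exists_max_image (fun ζ => #(W.filter (G.Adj ζ))) hZ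
  have hRW : W.filter (G.Adj ζ₀) ⊆ W := filter_subset _ _
  have hsum := card_filter_add_choose_two_le_card (disjoint_insert_right.2 ⟨hxZ, hZW⟩)
    (hRW.trans (subset_insert x W))
    (fun a ha b hb => hind ζ₀ hζ₀ a (hRW ha) b (hRW hb) (mem_filter.1 ha).2 (mem_filter.1 hb).2)
    (by rwa [union_insert])
  have := card_mul_le_card_filter_not_adj hxW hZx hmax
  have := choose_two_lt_mul_add_choose_two (card_pos.2 hZ) hcard (card_le_card hRW)
  omega

end Petals

section Exchange

variable [DecidableEq V] {G : SimpleGraph V} {k : ℕ} {Ep Em : Finset (Sym2 V)} {C : Finset V}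
  {x : V}

theorem editedGraph_sdiff_inter_sym2_adj_iff [DecidableRel G.Adj]
    (hC : (EditedGraph G Ep Em).IsClique (C : Set V)) {Z : Finset V} {p q : V} (hp : p ∈ C)
    (hq : q ∈ C) :
    (EditedGraph G (Ep \ (Ep ∩ C.sym2)) (Em \ ∅ ∪ Z.sym2.filter (· ∈ G.edgeSet))).Adj p q ↔
      G.Adj p q ∧ ¬(p ∈ Z ∧ q ∈ Z) := by
  have hsym : s(p, q) ∈ C.sym2 := mk_mem_sym2_iff.2 ⟨hp, hq⟩
  simp only [editedGraph_adj, mem_sdiff, mem_inter, hsym, and_true, and_not_self, or_false,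
    sdiff_empty, mem_union, mem_filter, mk_mem_sym2_iff, SimpleGraph.mem_edgeSet, not_or]
  constructor
  · rintro ⟨-, hG, -, h⟩
    exact ⟨hG, fun hZ => h ⟨hZ, hG⟩⟩
  · rintro ⟨hG, hZ⟩
    exact ⟨hG.ne, hG, (editedGraph_adj.1 (hC hp hq hG.ne)).2.2, fun h => hZ h.1⟩

/-- Replace the edited graph on `C` by `G` minus its edges inside `addedNbrs`: this undoes every
added edge inside `C` and deletes at most `#(addedNbrs Ep C x) choose 2` edges. -/
theorem IsMinSolution.card_inter_sym2_le (hmin : IsMinSolution G k Ep Em)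
    (hC : (EditedGraph G Ep Em).IsClique (C : Set V))
    (hcl : CommonNbrClosed (EditedGraph G Ep Em) C) (hx : x ∈ C)
    (hW : ∀ w ∈ keptNbrs Ep C x, ∀ c ∈ keptNbrs Ep C x, ∀ d ∈ keptNbrs Ep C x,
      G.Adj w c → G.Adj w d → c ≠ d → G.Adj c d)
    (hZW : ∀ ζ ∈ addedNbrs Ep C x, ∀ w ∈ keptNbrs Ep C x, ∀ w' ∈ keptNbrs Ep C x,
      G.Adj ζ w → G.Adj ζ w' → ¬ G.Adj w w') :
    #(Ep ∩ C.sym2) ≤ (#(addedNbrs Ep C x)).choose 2 := by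
  classical
  have hmemC : ∀ {p}, p ∈ insert x (addedNbrs Ep C x ∪ keptNbrs Ep C x) ↔ p ∈ C := by
    rw [insert_addedNbrs_union_keptNbrs hx]
  have h := hmin.card_add_card_le_card_of_commonNbrClosed hcl (A := Ep ∩ C.sym2) (A' := ∅)
    (B := (addedNbrs Ep C x).sym2.filter (· ∈ G.edgeSet)) subset_rfl (empty_subset _)
    (fun e he => ⟨(mem_filter.1 he).2, sym2_mono (fun p hp => hmemC.1
      (mem_insert_of_mem (mem_union_left _ hp))) (mem_filter.1 he).1⟩) ?_
  · rw [card_empty, add_zero] at h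
    exact h.trans (card_sym2_filter_adj_le _)
  intro a ha b hb c hc d hd
  exact not_isDiamond_of_adj_iff
    (fun p hp q hq => editedGraph_sdiff_inter_sym2_adj_iff hC (hmemC.1 hp) (hmemC.1 hq))
    (fun ζ hζ => hmin.1.not_adj_of_mem_addedNbrs hζ) (fun w hw => (adj_of_mem_keptNbrs hC hx hw).1)
    hW hZW (hmemC.2 ha) (hmemC.2 hb) (hmemC.2 hc) (hmemC.2 hd)

/-- Were there a common-neighbour-closed clique `L` through each `xw`, two neighbours of `w` in
`keptNbrs` would lie in `L`, hence be adjacent, and a vertex of `addedNbrs` adjacent to both ends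
of an edge `ww'` would lie in `L`, hence be adjacent to `x`; then the counting lemma contradicts
`IsMinSolution.card_inter_sym2_le`. -/
theorem IsMinSolution.exists_mem_keptNbrs_forall_not_commonNbrClosed
    (hmin : IsMinSolution G k Ep Em) (hC : (EditedGraph G Ep Em).IsClique (C : Set V))
    (hcl : CommonNbrClosed (EditedGraph G Ep Em) C) (hx : x ∈ C)
    (hZ : (addedNbrs Ep C x).Nonempty) (hZW : #(addedNbrs Ep C x) ≤ #(keptNbrs Ep C x)) :
    ∃ w ∈ keptNbrs Ep C x, ∀ L : Set V, G.IsClique L → x ∈ L → w ∈ L → ¬ CommonNbrClosed G L := by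
  by_contra! hpetal
  have hxW : ∀ w ∈ keptNbrs Ep C x, G.Adj x w := fun w hw => (adj_of_mem_keptNbrs hC hx hw).1
  have hxZ : ∀ ζ ∈ addedNbrs Ep C x, ¬ G.Adj x ζ := fun ζ hζ =>
    hmin.1.not_adj_of_mem_addedNbrs hζ
  have hW : ∀ w ∈ keptNbrs Ep C x, ∀ c ∈ keptNbrs Ep C x, ∀ d ∈ keptNbrs Ep C x,
      G.Adj w c → G.Adj w d → c ≠ d → G.Adj c d := by
    intro w hw c hc d hd hwc hwd hcd
    obtain ⟨L, hL, hxL, hwL, hLcl⟩ := hpetal w hw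
    exact hL (hLcl hxL hwL (hxW w hw).ne (hxW c hc) hwc)
      (hLcl hxL hwL (hxW w hw).ne (hxW d hd) hwd) hcd
  have hZW' : ∀ ζ ∈ addedNbrs Ep C x, ∀ w ∈ keptNbrs Ep C x, ∀ w' ∈ keptNbrs Ep C x,
      G.Adj ζ w → G.Adj ζ w' → ¬ G.Adj w w' := by
    intro ζ hζ w hw w' hw' hζw hζw' hww'
    obtain ⟨L, hL, hxL, hwL, hLcl⟩ := hpetal w hw
    have hw'L := hLcl hxL hwL (hxW w hw).ne (hxW w' hw') hww'
    exact hxZ ζ hζ (hL hxL (hLcl hwL hw'L hww'.ne hζw.symm hζw'.symm)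
      fun h => self_notMem_addedNbrs (h ▸ hζ))
  have hmemC : ∀ {p}, p ∈ insert x (addedNbrs Ep C x ∪ keptNbrs Ep C x) → p ∈ C := fun hp => by
    rwa [insert_addedNbrs_union_keptNbrs hx] at hp
  have := hmin.card_inter_sym2_le hC hcl hx hW hZW'
  have := choose_two_lt_card (A := Ep ∩ C.sym2) self_notMem_addedNbrs self_notMem_keptNbrs
    disjoint_addedNbrs_keptNbrs hZ hZW (fun ζ hζ h => hxZ ζ hζ h.symm) hZW'
    fun p hp q hq hpq hG => mem_inter.2 ⟨((editedGraph_adj.1 (hC (hmemC hp) (hmemC hq)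
      hpq)).2.1).resolve_left hG, mk_mem_sym2_iff.2 ⟨hmemC hp, hmemC hq⟩⟩
  omega

/-- Restoring the deleted edges inside `K` creates no diamond: as no added edge touches `K`, the
set `K` stays closed under common neighbours in the edited graph. -/
theorem IsMinSolution.disjoint_sym2_of_commonNbrClosed (hmin : IsMinSolution G k Ep Em)
    {K : Finset V} (hK : G.IsClique (K : Set V)) (hcl : CommonNbrClosed G K)
    (hEp : ∀ e ∈ Ep, ∀ a ∈ e, a ∉ K) :
    Disjoint Em K.sym2 := by
  have hHcl : CommonNbrClosed (EditedGraph G Ep Em) K := by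
    intro a b c ha hb hab hac hbc
    by_contra hc
    have hG : ∀ {p}, p ∈ K → (EditedGraph G Ep Em).Adj p c → G.Adj p c := fun hp hpc =>
      (editedGraph_adj.1 hpc).2.1.resolve_right fun h => hEp _ h _ (Sym2.mem_mk_left _ _) hp
    exact hc (hcl ha hb hab (hG ha hac) (hG hb hbc))
  have h := hmin.card_add_card_le_card_of_commonNbrClosed hHcl (A := ∅) (A' := Em ∩ K.sym2)
    (B := ∅) (empty_subset _) subset_rfl (by simp) ?_
  · simp only [card_empty, zero_add, Nat.le_zero, card_eq_zero] at h
    exact disjoint_iff_inter_eq_empty.2 h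
  rintro a - b - c hc d hd ⟨-, -, -, -, -, hcd, -, -, -, -, -, hncd⟩
  exact hncd (editedGraph_adj.2 ⟨hcd, Or.inl (hK hc hd hcd), by simp [hc, hd]⟩)

variable [Fintype V]

/-- Take the maximal clique `C` through `xy` of the edited graph. By rule (a), the maximal cliques
of `G` through `x` and a vertex of `keptNbrs Ep C x` are small; they cannot all be type II, since
type-II cliques are closed under common neighbours. -/
theorem IsMinSolution.exists_smallTypeI_of_mem_added (hred : Reduced G k)
    (hmin : IsMinSolution G k Ep Em) {y : V} (hxy : s(x, y) ∈ Ep) :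
    ∃ L, SmallTypeI G k L ∧ x ∈ L := by
  obtain ⟨C, hC, hxC, hyC⟩ := exists_isMaxClique_of_adj (hmin.1.adj_of_mem_added hxy)
  have hcl := hmin.1.diamondFree.commonNbrClosed hC
  have hyZ : y ∈ addedNbrs Ep C x :=
    mem_addedNbrs.2 ⟨(hmin.1.adj_of_mem_added hxy).ne.symm, hyC, hxy⟩
  obtain ⟨w, hw, hnot⟩ := hmin.exists_mem_keptNbrs_forall_not_commonNbrClosed hC.1 hcl hxC ⟨y, hyZ⟩
    (hmin.card_addedNbrs_le hC.1 hcl hxC)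
  obtain ⟨hxw, hxwEm⟩ := adj_of_mem_keptNbrs hC.1 hxC hw
  have hyw : (EditedGraph G Ep Em).Adj y w := hC.1 hyC (mem_keptNbrs.1 hw).2.1
    fun h => disjoint_left.1 disjoint_addedNbrs_keptNbrs hyZ (h ▸ hw)
  obtain ⟨L, hL, hxL, hwL⟩ := exists_isMaxClique_of_adj hxw
  have hsmall := hred.card_lt_of_mem_added hmin.1 hxy hxw hxwEm hyw hL.1 hxL hwL
  rcases typeI_or_typeII hL with hI | hII
  · exact ⟨L, ⟨hI, hsmall⟩, hxL⟩
  · exact absurd hII.commonNbrClosed (hnot L hL.1 hxL hwL)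

end Exchange

theorem stmt9_general [Fintype V] [DecidableEq V] (G : SimpleGraph V) (k : ℕ)
    (hred : Reduced G k)
    (Ep Em : Finset (Sym2 V)) (hmin : IsMinSolution G k Ep Em)
    (K : Finset V) (hK : IsMaxClique G K)
    (u v : V) (hmem : s(u, v) ∈ Em) (hu : u ∈ K) (hv : v ∈ K) :
    SmallTypeI G k K ∨
    (TypeII G K ∧ ∃ K' : Finset V, SmallTypeI G k K' ∧ (K ∩ K').Nonempty) := by
  have hsmall : #K < 3 * k + 2 := by
    have := hmin.1.card_le_of_mem_deleted hmem hK.1 hu hv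
    omega
  rcases typeI_or_typeII hK with hI | hII
  · exact Or.inl ⟨hI, hsmall⟩
  refine Or.inr ⟨hII, ?_⟩
  by_contra hno
  have hEp : ∀ e ∈ Ep, ∀ a ∈ e, a ∉ K := by
    intro e he a hae haK
    obtain ⟨b, rfl⟩ := Sym2.mem_iff_exists.1 hae
    obtain ⟨L, hL, haL⟩ := hmin.exists_smallTypeI_of_mem_added hred he
    exact hno ⟨L, hL, a, mem_inter.2 ⟨haK, haL⟩⟩
  exact disjoint_left.1 (hmin.disjoint_sym2_of_commonNbrClosed hK.1 hII.commonNbrClosed hEp) hmem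
    (mk_mem_sym2_iff.2 ⟨hu, hv⟩)

/-- for a minimum solution to a reduced yes-instance, a maximal
clique containing both ends of a deleted edge is either a small type-I maximal
clique, or a type-II maximal clique intersecting a small type-I one. -/
theorem stmt9 [Fintype V] [DecidableEq V] (G : SimpleGraph V) (k : ℕ)
    (hred : Reduced G k) (hyes : YesInstance G k)
    (Ep Em : Finset (Sym2 V)) (hmin : IsMinSolution G k Ep Em)
    (K : Finset V) (hK : IsMaxClique G K)
    (u v : V) (hmem : s(u, v) ∈ Em) (hu : u ∈ K) (hv : v ∈ K) :
    SmallTypeI G k K ∨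
    (TypeII G K ∧ ∃ K' : Finset V, SmallTypeI G k K' ∧ (K ∩ K').Nonempty) :=
  stmt9_general G k hred Ep Em hmin K hK u v hmem hu hv
end

section
/- A maximal clique K of a graph G is of type I if and only if there exists an induced diamond in G whose cross edge has both of its ends in K. -/
variable {V : Type*}

open Classical in
lemma exists_maxclique_ext [Fintype V] [DecidableEq V] (G : SimpleGraph V) (s : Finset V)
    (hs : G.IsClique (↑s : Set V)) : ∃ K : Finset V, IsMaxClique G K ∧ s ⊆ K := by
  classical
  set A : Finset (Finset V) :=
    Finset.univ.filter (fun t => G.IsClique (↑t : Set V) ∧ s ⊆ t) with hA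
  have hsA : s ∈ A := by simp [hA, hs]
  obtain ⟨K, hKA, hmax⟩ := A.exists_max_image Finset.card ⟨s, hsA⟩
  simp only [hA, Finset.mem_filter, Finset.mem_univ, true_and] at hKA
  refine ⟨K, ⟨hKA.1, fun K' hK' hsub => ?_⟩, hKA.2⟩
  have hK'A : K' ∈ A := by
    simp [hA, hK', hKA.2.trans hsub]
  exact Finset.eq_of_subset_of_card_le hsub (hmax K' hK'A)

lemma nonadj_of_not_mem_maxclique [DecidableEq V] {G : SimpleGraph V} {K : Finset V}
    (hK : IsMaxClique G K) {x : V} (hx : x ∉ K) :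
    ∃ y ∈ K, x ≠ y ∧ ¬ G.Adj x y := by
  by_contra h
  push_neg at h
  have hcl : G.IsClique (↑(insert x K) : Set V) := by
    intro a ha b hb hab
    simp only [Finset.coe_insert, Set.mem_insert_iff, Finset.mem_coe] at ha hb
    rcases ha with rfl | ha <;> rcases hb with rfl | hb
    · exact absurd rfl hab
    · exact h b hb hab
    · exact (h a ha (Ne.symm hab)).symm
    · exact hK.1 ha hb hab
  have := hK.2 _ hcl (Finset.subset_insert x K)
  exact hx (this ▸ Finset.mem_insert_self x K)

/-- a maximal clique `K` is of type I iff there is an induced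
diamond whose cross edge has both ends in `K`. -/
theorem stmt10 [Fintype V] [DecidableEq V] (G : SimpleGraph V)
    (K : Finset V) (hK : IsMaxClique G K) :
    TypeI G K ↔ ∃ u v x y : V, IsDiamond G u v x y ∧ u ∈ K ∧ v ∈ K := by
  constructor
  · rintro ⟨-, K', hK', hne, hcard⟩
    obtain ⟨u, huI, v, hvI, huv⟩ := Finset.one_lt_card.mp hcard
    have huK : u ∈ K := (Finset.mem_inter.mp huI).1
    have huK' : u ∈ K' := (Finset.mem_inter.mp huI).2
    have hvK : v ∈ K := (Finset.mem_inter.mp hvI).1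
    have hvK' : v ∈ K' := (Finset.mem_inter.mp hvI).2
    have hKnotsub : ¬ K ⊆ K' := fun hsub => hne (hK.2 K' hK'.1 hsub).symm
    obtain ⟨x, hxK, hxK'⟩ := Finset.not_subset.mp hKnotsub
    obtain ⟨y, hyK', hxy, hnadj⟩ := nonadj_of_not_mem_maxclique hK' hxK'
    have hux : u ≠ x := fun h => hxK' (h ▸ huK')
    have hvx : v ≠ x := fun h => hxK' (h ▸ hvK')
    have hadjux : G.Adj u x := hK.1 huK hxK hux
    have hadjvx : G.Adj v x := hK.1 hvK hxK hvx
    have huy : u ≠ y := fun h => hnadj (h ▸ hadjux.symm)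
    have hvy : v ≠ y := fun h => hnadj (h ▸ hadjvx.symm)
    exact ⟨u, v, x, y, ⟨huv, hux, huy, hvx, hvy, hxy, hK.1 huK hvK huv, hadjux,
      hK'.1 huK' hyK' huy, hadjvx, hK'.1 hvK' hyK' hvy, hnadj⟩, huK, hvK⟩
  · rintro ⟨u, v, x, y, ⟨huv, hux, huy, hvx, hvy, hxy, hauv, haux, hauy, havx, havy, hnxy⟩,
      huK, hvK⟩
    have key : ∀ w : V, w ∉ K → G.Adj u w → G.Adj v w →
        ∃ K' : Finset V, IsMaxClique G K' ∧ K' ≠ K ∧ 2 ≤ (K ∩ K').card := by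
      intro w hwK hauw havw
      have hcl : G.IsClique (↑({u, v, w} : Finset V) : Set V) := by
        intro a ha b hb hab
        simp only [Finset.coe_insert, Set.mem_insert_iff, Finset.coe_singleton,
          Set.mem_singleton_iff] at ha hb
        rcases ha with rfl | rfl | rfl <;> rcases hb with rfl | rfl | rfl <;>
          first
            | exact absurd rfl hab
            | assumption
            | exact hauv.symm
            | exact hauw.symm
            | exact havw.symm
      obtain ⟨K', hK', hsub⟩ := exists_maxclique_ext G _ hcl
      refine ⟨K', hK', fun h => hwK (h ▸ hsub (by simp)), ?_⟩
      have : ({u, v} : Finset V) ⊆ K ∩ K' := by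
        intro a ha
        rcases Finset.mem_insert.mp ha with rfl | ha
        · exact Finset.mem_inter.mpr ⟨huK, hsub (by simp)⟩
        · rw [Finset.mem_singleton] at ha
          subst ha
          exact Finset.mem_inter.mpr ⟨hvK, hsub (by simp)⟩
      calc 2 = ({u, v} : Finset V).card := (Finset.card_pair huv).symm
        _ ≤ _ := Finset.card_le_card this
    by_cases hxK : x ∈ K
    · have hyK : y ∉ K := fun hyK => hnxy (hK.1 hxK hyK hxy)
      obtain ⟨K', h1, h2, h3⟩ := key y hyK hauy havy
      exact ⟨hK, K', h1, h2, h3⟩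
    · obtain ⟨K', h1, h2, h3⟩ := key x hxK haux havx
      exact ⟨hK, K', h1, h2, h3⟩
end

section
/- Let (G, k) be a reduced yes-instance of the diamond-free editing problem. Then G has at most 6k^2 big maximal cliques of type I. -/
variable {V : Type*}

section Stmt12Helpers

variable {G : SimpleGraph V} {k : ℕ}

lemma sumElim_injective {n m : ℕ} {x : Fin n → V} {y : Fin m → V}
    (hx : Function.Injective x) (hy : Function.Injective y)
    (hxy : ∀ i j, x i ≠ y j) : Function.Injective (Sum.elim x y) := by
  intro s t h
  cases s with
  | inl i =>
    cases t with
    | inl j => simp only [Sum.elim_inl] at h; exact congrArg Sum.inl (hx h)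
    | inr j => exact absurd h (hxy i j)
  | inr i =>
    cases t with
    | inl j => exact absurd h.symm (hxy j i)
    | inr j => simp only [Sum.elim_inr] at h; exact congrArg Sum.inr (hy h)

lemma sumElim_left_inj {n m : ℕ} {x : Fin n → V} {y : Fin m → V}
    (h : Function.Injective (Sum.elim x y)) : Function.Injective x := by
  intro i j hij
  have := h (a₁ := Sum.inl i) (a₂ := Sum.inl j) (by simpa using hij)
  simpa using this

lemma sumElim_right_inj {n m : ℕ} {x : Fin n → V} {y : Fin m → V}
    (h : Function.Injective (Sum.elim x y)) : Function.Injective y := by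
  intro i j hij
  have := h (a₁ := Sum.inr i) (a₂ := Sum.inr j) (by simpa using hij)
  simpa using this

lemma sumElim_cross {n m : ℕ} {x : Fin n → V} {y : Fin m → V}
    (h : Function.Injective (Sum.elim x y)) : ∀ i j, x i ≠ y j := by
  intro i j hij
  have := h (a₁ := Sum.inl i) (a₂ := Sum.inr j) (by simpa using hij)
  simp at this

lemma exists_enum {n : ℕ} {s : Finset V} (h : n ≤ s.card) :
    ∃ f : Fin n → V, Function.Injective f ∧ ∀ i, f i ∈ s := by
  obtain ⟨t, hts, htc⟩ := Finset.exists_subset_card_eq h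
  refine ⟨fun i => (t.equivFin.symm (Fin.cast htc.symm i) : V), ?_,
    fun i => hts (t.equivFin.symm (Fin.cast htc.symm i)).2⟩
  intro i j hij
  have h2 := t.equivFin.symm.injective (Subtype.ext hij)
  exact Fin.cast_injective _ h2

lemma exists_hall_pick {n : ℕ} [DecidableEq V] (Z : Fin n → Finset V)
    (h : ∀ i, n ≤ (Z i).card) :
    ∃ z : Fin n → V, Function.Injective z ∧ ∀ i, z i ∈ Z i := by
  rw [← Finset.all_card_le_biUnion_card_iff_exists_injective]
  intro s
  rcases s.eq_empty_or_nonempty with rfl | ⟨i, hi⟩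
  · simp
  · calc s.card ≤ n := by simpa using Finset.card_le_univ s
    _ ≤ (Z i).card := h i
    _ ≤ (s.biUnion Z).card :=
        Finset.card_le_card (fun z hz => Finset.mem_biUnion.mpr ⟨i, hi, hz⟩)

lemma clique_adj {K : Finset V} (h : G.IsClique (↑K : Set V)) {p q : V}
    (hp : p ∈ K) (hq : q ∈ K) (hne : p ≠ q) : G.Adj p q :=
  h (by simpa using hp) (by simpa using hq) hne

lemma mk_nonedge_witness [DecidableEq V] {a c : V} {w : Fin (k+1) → V}
    {Z : Fin (k+1) → Finset V}
    (hwinj : Function.Injective w)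
    (hwa : ∀ i, G.Adj a (w i)) (hwc : ∀ i, G.Adj c (w i))
    (hZcard : ∀ i, k+1 ≤ (Z i).card)
    (hZa : ∀ i, ∀ z ∈ Z i, G.Adj a z) (hZc : ∀ i, ∀ z ∈ Z i, G.Adj c z)
    (hZn : ∀ i, ∀ z ∈ Z i, ¬ G.Adj (w i) z)
    (hdis : ∀ i j, ∀ z ∈ Z j, w i ≠ z) :
    NonEdgePairedWitness G k a c := by
  obtain ⟨z, hzinj, hz⟩ := exists_hall_pick Z hZcard
  exact ⟨w, z, sumElim_injective hwinj hzinj (fun i j => hdis i j _ (hz j)),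
    fun i => ⟨hwa i, hwc i, hZa i _ (hz i), hZc i _ (hz i)⟩,
    fun i => hZn i _ (hz i)⟩

lemma nonnbrs [DecidableEq V] (hred : Reduced G k) {K : Finset V} {x : V}
    (hK : IsMaxClique G K) (hbig : 3*k+2 ≤ K.card) (hx : x ∉ K) :
    ∃ B : Finset V, B ⊆ K ∧ (∀ y ∈ B, ¬ G.Adj x y) ∧ k+1 ≤ B.card := by
  classical
  set A := K.filter (fun y => G.Adj x y) with hA
  set B := K.filter (fun y => ¬ G.Adj x y) with hB
  have hcard : A.card + B.card = K.card :=
    Finset.card_filter_add_card_filter_not (fun y => G.Adj x y)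
  have hBsub : B ⊆ K := Finset.filter_subset _ _
  have hBn : ∀ y ∈ B, ¬ G.Adj x y := fun y hy => (Finset.mem_filter.mp hy).2
  refine ⟨B, hBsub, hBn, ?_⟩
  by_contra hlt
  push_neg at hlt
  have hBne : B.Nonempty := by
    rw [Finset.nonempty_iff_ne_empty]
    intro hemp
    have hall : ∀ y ∈ K, G.Adj x y := by
      intro y hy
      by_contra hn
      have : y ∈ B := Finset.mem_filter.mpr ⟨hy, hn⟩
      rw [hemp] at this
      simp at this
    have hcl : G.IsClique (↑(insert x K) : Set V) := by
      intro p hp q hq hne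
      simp only [Finset.coe_insert, Set.mem_insert_iff, Finset.mem_coe] at hp hq
      rcases hp with rfl | hp
      · rcases hq with rfl | hq
        · exact absurd rfl hne
        · exact hall q hq
      · rcases hq with rfl | hq
        · exact (hall p hp).symm
        · exact clique_adj hK.1 hp hq hne
    have hKeq := hK.2 _ hcl (Finset.subset_insert _ _)
    exact hx (hKeq.symm ▸ Finset.mem_insert_self x K)
  obtain ⟨y, hyB⟩ := hBne
  have hyK : y ∈ K := hBsub hyB
  have hxy : ¬ G.Adj x y := hBn y hyB
  have hxney : x ≠ y := fun h => hx (h ▸ hyK)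
  have hAcard : 2*(k+1) ≤ A.card := by omega
  obtain ⟨A1, hA1sub, hA1card⟩ := Finset.exists_subset_card_eq
    (show k+1 ≤ A.card by omega)
  have hA2 : k+1 ≤ (A \ A1).card := by
    have := Finset.card_sdiff_of_subset hA1sub
    omega
  obtain ⟨f1, hf1inj, hf1⟩ := exists_enum (n := k+1) (s := A1) (le_of_eq hA1card.symm)
  obtain ⟨f2, hf2inj, hf2⟩ := exists_enum (n := k+1) (s := A \ A1) hA2
  have hmemA : ∀ {v : V}, v ∈ A → G.Adj x v ∧ v ∈ K :=
    fun hv => ⟨(Finset.mem_filter.mp hv).2, (Finset.mem_filter.mp hv).1⟩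
  have hf1A : ∀ i, G.Adj x (f1 i) ∧ f1 i ∈ K := fun i => hmemA (hA1sub (hf1 i))
  have hf2A : ∀ i, G.Adj x (f2 i) ∧ f2 i ∈ K :=
    fun i => hmemA (Finset.sdiff_subset (hf2 i))
  have hadjy : ∀ {v : V}, G.Adj x v → v ∈ K → G.Adj y v := by
    intro v hv hvK
    exact clique_adj hK.1 hyK hvK (fun h => hxy (h ▸ hv))
  refine hred.1 x y hxney hxy ⟨f1, f2, ?_, ?_, ?_⟩
  · refine sumElim_injective hf1inj hf2inj (fun i j h => ?_)
    have h1 : f1 i ∈ A1 := hf1 i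
    have h2 : f2 j ∈ A \ A1 := hf2 j
    rw [h] at h1
    exact (Finset.mem_sdiff.mp h2).2 h1
  · intro i
    exact ⟨(hf1A i).1, hadjy (hf1A i).1 (hf1A i).2,
      (hf2A i).1, hadjy (hf2A i).1 (hf2A i).2⟩
  · intro i
    refine clique_adj hK.1 (hf1A i).2 (hf2A i).2 (fun h => ?_)
    have h1 : f1 i ∈ A1 := hf1 i
    have h2 : f2 i ∈ A \ A1 := hf2 i
    rw [h] at h1
    exact (Finset.mem_sdiff.mp h2).2 h1

lemma bigMeet [DecidableEq V] (hred : Reduced G k) {K1 K2 : Finset V}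
    (h1 : IsMaxClique G K1) (h1b : 3*k+2 ≤ K1.card)
    (h2 : IsMaxClique G K2) (h2b : 3*k+2 ≤ K2.card)
    (hne : K1 ≠ K2) : (K1 ∩ K2).card ≤ 1 := by
  by_contra h
  push_neg at h
  obtain ⟨a, ha, b, hb, hab⟩ := Finset.one_lt_card.mp h
  have haK1 : a ∈ K1 := (Finset.mem_inter.mp ha).1
  have haK2 : a ∈ K2 := (Finset.mem_inter.mp ha).2
  have hbK1 : b ∈ K1 := (Finset.mem_inter.mp hb).1
  have hbK2 : b ∈ K2 := (Finset.mem_inter.mp hb).2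
  have hK2nsub : ¬ K2 ⊆ K1 := by
    intro hsub
    exact hne (h2.2 K1 h1.1 hsub).symm
  obtain ⟨z0, hz0K2, hz0K1⟩ := Finset.not_subset.mp hK2nsub
  obtain ⟨W, hWsub, hWn, hWcard⟩ := nonnbrs hred h1 h1b hz0K1
  have hWK2 : ∀ y ∈ W, y ∉ K2 := by
    intro y hy hyK2
    have hyz0 : y ≠ z0 := fun h => hz0K1 (h ▸ hWsub hy)
    exact hWn y hy (clique_adj h2.1 hz0K2 hyK2 (Ne.symm hyz0))
  obtain ⟨w, hwinj, hw⟩ := exists_enum (n := k+1) hWcard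
  have hwK1 : ∀ i, w i ∈ K1 := fun i => hWsub (hw i)
  have hwK2 : ∀ i, w i ∉ K2 := fun i => hWK2 _ (hw i)
  have hZ : ∀ i : Fin (k+1), ∃ B : Finset V, B ⊆ K2 ∧
      (∀ y ∈ B, ¬ G.Adj (w i) y) ∧ k+1 ≤ B.card :=
    fun i => nonnbrs hred h2 h2b (hwK2 i)
  choose Z hZsub hZn hZcard using hZ
  have hadjab : G.Adj a b := clique_adj h1.1 haK1 hbK1 hab
  have hadja : ∀ i, G.Adj a (w i) :=
    fun i => clique_adj h1.1 haK1 (hwK1 i) (fun h => hwK2 i (h ▸ haK2))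
  have hadjb : ∀ i, G.Adj b (w i) :=
    fun i => clique_adj h1.1 hbK1 (hwK1 i) (fun h => hwK2 i (h ▸ hbK2))
  refine hred.2 a b hadjab ?_
  refine mk_nonedge_witness hwinj hadja hadjb hZcard ?_ ?_ hZn ?_
  · intro i z hz
    refine clique_adj h2.1 haK2 (hZsub i hz) (fun h => ?_)
    exact hZn i z hz (h ▸ (hadja i).symm)
  · intro i z hz
    refine clique_adj h2.1 hbK2 (hZsub i hz) (fun h => ?_)
    exact hZn i z hz (h ▸ (hadjb i).symm)
  · intro i j z hz h
    exact hwK2 i (h ▸ hZsub j hz)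
def HasNonadjPairs (G : SimpleGraph V) (n : ℕ) (S : Finset V) : Prop :=
  ∃ x y : Fin n → V, Function.Injective (Sum.elim x y) ∧
    ∀ i, x i ∈ S ∧ y i ∈ S ∧ ¬ G.Adj (x i) (y i) ∧ x i ≠ y i

lemma pairs_greedy [DecidableEq V] :
    ∀ (j : ℕ) (S : Finset V), ¬ HasNonadjPairs G (j+1) S →
      ∃ T, T ⊆ S ∧ S.card ≤ T.card + 2*j ∧ G.IsClique (↑T : Set V) := by
  intro j
  induction j with
  | zero =>
    intro S hS
    refine ⟨S, Finset.Subset.refl S, by omega, ?_⟩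
    intro p hp q hq hne
    by_contra hadj
    haveI : Subsingleton (Fin (0+1)) := Fin.subsingleton_one
    refine hS ⟨fun _ => p, fun _ => q, ?_, ?_⟩
    · exact sumElim_injective (Function.injective_of_subsingleton _)
        (Function.injective_of_subsingleton _) (fun _ _ => hne)
    · exact fun i => ⟨Finset.mem_coe.mp hp, Finset.mem_coe.mp hq, hadj, hne⟩
  | succ j ih =>
    intro S hS
    by_cases hc : G.IsClique (↑S : Set V)
    · exact ⟨S, Finset.Subset.refl S, by omega, hc⟩
    · rw [SimpleGraph.isClique_iff, Set.Pairwise] at hc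
      push_neg at hc
      obtain ⟨p, hp, q, hq, hpq, hnadj⟩ := hc
      have hpS : p ∈ S := Finset.mem_coe.mp hp
      have hqS : q ∈ S := Finset.mem_coe.mp hq
      set S' := (S.erase p).erase q with hS'def
      have hS'sub : S' ⊆ S :=
        Finset.Subset.trans (Finset.erase_subset _ _) (Finset.erase_subset _ _)
      have hS'p : ∀ t ∈ S', t ≠ p ∧ t ≠ q := by
        intro t ht
        have h1 := Finset.mem_erase.mp ht
        have h2 := Finset.mem_erase.mp h1.2
        exact ⟨h2.1, h1.1⟩
      have hnS' : ¬ HasNonadjPairs G (j+1) S' := by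
        rintro ⟨x, y, hinj, hmem⟩
        apply hS
        refine ⟨Fin.cons p x, Fin.cons q y, ?_, ?_⟩
        · refine sumElim_injective ?_ ?_ ?_
          · rw [Fin.cons_injective_iff]
            refine ⟨?_, sumElim_left_inj hinj⟩
            rintro ⟨i, hi⟩
            exact (hS'p _ (hmem i).1).1 hi
          · rw [Fin.cons_injective_iff]
            refine ⟨?_, sumElim_right_inj hinj⟩
            rintro ⟨i, hi⟩
            exact (hS'p _ (hmem i).2.1).2 hi
          · intro i j'
            refine Fin.cases ?_ (fun i' => ?_) i <;>
              refine Fin.cases ?_ (fun j'' => ?_) j' <;>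
              simp only [Fin.cons_zero, Fin.cons_succ]
            · exact hpq
            · exact fun h => (hS'p _ (hmem j'').2.1).1 h.symm
            · exact fun h => (hS'p _ (hmem i').1).2 h
            · exact sumElim_cross hinj i' j''
        · intro i
          refine Fin.cases ?_ (fun i' => ?_) i <;>
            simp only [Fin.cons_zero, Fin.cons_succ]
          · exact ⟨hpS, hqS, hnadj, hpq⟩
          · exact ⟨hS'sub (hmem i').1, hS'sub (hmem i').2.1,
              (hmem i').2.2.1, (hmem i').2.2.2⟩
      obtain ⟨T, hT, hTc, hTcl⟩ := ih S' hnS'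
      have hqS'' : q ∈ S.erase p := Finset.mem_erase.mpr ⟨fun h => hpq h.symm, hqS⟩
      have hc1 : (S.erase p).card + 1 = S.card := by
        rw [Finset.card_erase_of_mem hpS]
        have : 1 ≤ S.card := Finset.card_pos.mpr ⟨p, hpS⟩
        omega
      have hc2 : S'.card + 1 = (S.erase p).card := by
        rw [hS'def, Finset.card_erase_of_mem hqS'']
        have : 1 ≤ (S.erase p).card := Finset.card_pos.mpr ⟨q, hqS''⟩
        omega
      exact ⟨T, Finset.Subset.trans hT hS'sub, by omega, hTcl⟩

lemma F_bound [DecidableEq V] (hred : Reduced G k) {a b : V} (hab : G.Adj a b)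
    (F : Finset (Finset V))
    (hF : ∀ K ∈ F, IsMaxClique G K ∧ 3*k+2 ≤ K.card ∧ a ∈ K ∧ b ∉ K ∧
      ∃ v ∈ K, v ≠ a ∧ G.Adj b v) :
    F.card ≤ 3*k := by
  classical
  set vf : Finset V → V := fun K =>
    if h : ∃ v ∈ K, v ≠ a ∧ G.Adj b v then h.choose else a with hvf
  have hvfK : ∀ K ∈ F, vf K ∈ K ∧ vf K ≠ a ∧ G.Adj b (vf K) := by
    intro K hK
    have h := (hF K hK).2.2.2.2
    simp only [hvf, dif_pos h]
    exact ⟨h.choose_spec.1, h.choose_spec.2.1, h.choose_spec.2.2⟩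
  have hadj_a : ∀ K ∈ F, G.Adj a (vf K) := fun K hK =>
    clique_adj (hF K hK).1.1 (hF K hK).2.2.1 (hvfK K hK).1 (Ne.symm (hvfK K hK).2.1)
  have hmeet : ∀ K ∈ F, ∀ K' ∈ F, K ≠ K' → ∀ z, z ∈ K → z ∈ K' → z = a := by
    intro K hK K' hK' hne z hz hz'
    by_contra hza
    have hcard := bigMeet hred (hF K hK).1 (hF K hK).2.1 (hF K' hK').1 (hF K' hK').2.1 hne
    have hsub : ({a, z} : Finset V) ⊆ K ∩ K' := by
      intro t ht
      rcases Finset.mem_insert.mp ht with rfl | ht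
      · exact Finset.mem_inter.mpr ⟨(hF K hK).2.2.1, (hF K' hK').2.2.1⟩
      · rw [Finset.mem_singleton.mp ht]
        exact Finset.mem_inter.mpr ⟨hz, hz'⟩
    have h2 : 2 ≤ (K ∩ K').card := by
      have := Finset.card_le_card hsub
      rwa [Finset.card_pair (Ne.symm hza)] at this
    omega
  have hinjOn : Set.InjOn vf ↑F := by
    intro K hK K' hK' heq
    by_contra hne
    have h1 := (hvfK K (Finset.mem_coe.mp hK)).1
    have h2 : vf K ∈ K' := heq ▸ (hvfK K' (Finset.mem_coe.mp hK')).1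
    exact (hvfK K (Finset.mem_coe.mp hK)).2.1
      (hmeet K (Finset.mem_coe.mp hK) K' (Finset.mem_coe.mp hK') hne _ h1 h2)
  set S := F.image vf with hSdef
  have hScard : S.card = F.card := Finset.card_image_of_injOn hinjOn
  have hSadj : ∀ s ∈ S, G.Adj a s ∧ G.Adj b s := by
    intro s hs
    obtain ⟨K, hK, rfl⟩ := Finset.mem_image.mp hs
    exact ⟨hadj_a K hK, (hvfK K hK).2.2⟩
  have hdeg : ∀ s ∈ S, ∀ N, N ⊆ S.erase s → (∀ t ∈ N, G.Adj s t) → N.card ≠ k := by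
    intro s hs N hN hNadj hNcard
    obtain ⟨K, hKF, hvfs⟩ := Finset.mem_image.mp hs
    have hNK : ∀ t ∈ N, t ∉ K ∧ G.Adj a t ∧ G.Adj b t := by
      intro t ht
      have htS : t ∈ S := (Finset.mem_erase.mp (hN ht)).2
      have hts : t ≠ s := (Finset.mem_erase.mp (hN ht)).1
      obtain ⟨K', hK'F, hvft⟩ := Finset.mem_image.mp htS
      have hKK' : K' ≠ K := fun h => hts (by rw [← hvft, h, hvfs])
      refine ⟨?_, (hSadj t htS).1, (hSadj t htS).2⟩
      intro htK
      have heq := hmeet K' hK'F K hKF hKK' t (hvft ▸ (hvfK K' hK'F).1) htK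
      exact (hvfK K' hK'F).2.1 (hvft.trans heq)
    obtain ⟨en, heninj, hen⟩ := exists_enum (n := k) (s := N) (le_of_eq hNcard.symm)
    obtain ⟨Zb, hZbK, hZbn, hZbc⟩ :=
      nonnbrs hred (hF K hKF).1 (hF K hKF).2.1 (hF K hKF).2.2.2.1
    have hZt : ∀ i : Fin k, ∃ B : Finset V, B ⊆ K ∧
        (∀ y ∈ B, ¬ G.Adj (en i) y) ∧ k+1 ≤ B.card :=
      fun i => nonnbrs hred (hF K hKF).1 (hF K hKF).2.1 (hNK _ (hen i)).1
    choose Zt hZtK hZtn hZtc using hZt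
    have hsK : s ∈ K := hvfs ▸ (hvfK K hKF).1
    have hsadj : G.Adj a s := (hSadj s hs).1
    have hsb : G.Adj b s := (hSadj s hs).2
    have haK : a ∈ K := (hF K hKF).2.2.1
    have hbK : b ∉ K := (hF K hKF).2.2.2.1
    refine hred.2 a s hsadj (mk_nonedge_witness (w := Fin.cons b en)
      (Z := Fin.cons Zb Zt) ?_ ?_ ?_ ?_ ?_ ?_ ?_ ?_)
    · rw [Fin.cons_injective_iff]
      refine ⟨?_, heninj⟩
      rintro ⟨i, hi⟩
      exact G.irrefl (hi ▸ (hNK _ (hen i)).2.2)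
    · intro i
      refine Fin.cases ?_ (fun i' => ?_) i <;> simp only [Fin.cons_zero, Fin.cons_succ]
      · exact hab
      · exact (hNK _ (hen i')).2.1
    · intro i
      refine Fin.cases ?_ (fun i' => ?_) i <;> simp only [Fin.cons_zero, Fin.cons_succ]
      · exact hsb.symm
      · exact hNadj _ (hen i')
    · intro i
      refine Fin.cases ?_ (fun i' => ?_) i <;> simp only [Fin.cons_zero, Fin.cons_succ]
      · exact hZbc
      · exact hZtc i'
    · intro i
      refine Fin.cases ?_ (fun i' => ?_) i <;> simp only [Fin.cons_zero, Fin.cons_succ] <;>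
        intro z hz
      · exact clique_adj (hF K hKF).1.1 haK (hZbK hz)
          (fun h => hZbn z hz (h ▸ hab.symm))
      · exact clique_adj (hF K hKF).1.1 haK (hZtK i' hz)
          (fun h => hZtn i' z hz (h ▸ ((hNK _ (hen i')).2.1).symm))
    · intro i
      refine Fin.cases ?_ (fun i' => ?_) i <;> simp only [Fin.cons_zero, Fin.cons_succ] <;>
        intro z hz
      · exact clique_adj (hF K hKF).1.1 hsK (hZbK hz)
          (fun h => hZbn z hz (h ▸ hsb))
      · exact clique_adj (hF K hKF).1.1 hsK (hZtK i' hz)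
          (fun h => hZtn i' z hz (h ▸ (hNadj _ (hen i')).symm))
    · intro i
      refine Fin.cases ?_ (fun i' => ?_) i <;> simp only [Fin.cons_zero, Fin.cons_succ]
      · exact fun z hz => hZbn z hz
      · exact fun z hz => hZtn i' z hz
    · intro i j z hz h
      have hzK : z ∈ K := by
        rcases Fin.eq_zero_or_eq_succ j with rfl | ⟨j', rfl⟩
        · exact hZbK (by simpa using hz)
        · exact hZtK j' (by simpa using hz)
      rcases Fin.eq_zero_or_eq_succ i with rfl | ⟨i', rfl⟩
      · rw [Fin.cons_zero] at h
        exact hbK (h ▸ hzK)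
      · rw [Fin.cons_succ] at h
        exact (hNK _ (hen i')).1 (h ▸ hzK)
  by_contra hFc
  push_neg at hFc
  have hSc : 3*k+1 ≤ S.card := by omega
  have hnp : ¬ HasNonadjPairs G (k+1) S := by
    rintro ⟨x, y, hinj, hmem⟩
    refine hred.2 a b hab ⟨x, y, hinj, ?_, ?_⟩
    · intro i
      exact ⟨(hSadj _ (hmem i).1).1, (hSadj _ (hmem i).1).2,
        (hSadj _ (hmem i).2.1).1, (hSadj _ (hmem i).2.1).2⟩
    · exact fun i => (hmem i).2.2.1
  obtain ⟨T, hTS, hTc, hTcl⟩ := pairs_greedy k S hnp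
  have hTcard : k+1 ≤ T.card := by omega
  obtain ⟨s, hsT⟩ := Finset.card_pos.mp (by omega : 0 < T.card)
  have hsS : s ∈ S := hTS hsT
  have hTes : k ≤ (T.erase s).card := by
    rw [Finset.card_erase_of_mem hsT]; omega
  obtain ⟨N, hNsub, hNcard⟩ := Finset.exists_subset_card_eq hTes
  refine hdeg s hsS N ?_ ?_ hNcard
  · intro t ht
    have h1 := Finset.mem_erase.mp (hNsub ht)
    exact Finset.mem_erase.mpr ⟨h1.1, hTS h1.2⟩
  · intro t ht
    have h1 := Finset.mem_erase.mp (hNsub ht)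
    exact clique_adj hTcl hsT h1.2 (Ne.symm h1.1)
lemma F_bound' [DecidableEq V] (hred : Reduced G k) {a b : V} (hab : G.Adj a b)
    {K0 : Finset V} (hK0 : IsMaxClique G K0) (hK0b : 3*k+2 ≤ K0.card)
    (ha0 : a ∈ K0) (hb0 : b ∈ K0)
    (F : Finset (Finset V))
    (hF : ∀ K ∈ F, IsMaxClique G K ∧ 3*k+2 ≤ K.card ∧ a ∈ K ∧ b ∉ K ∧
      ∃ v ∈ K, v ≠ a ∧ G.Adj b v) :
    F.card ≤ k := by
  classical
  by_contra hFc
  push_neg at hFc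
  set vf : Finset V → V := fun K =>
    if h : ∃ v ∈ K, v ≠ a ∧ G.Adj b v then h.choose else a with hvf
  have hvfK : ∀ K ∈ F, vf K ∈ K ∧ vf K ≠ a ∧ G.Adj b (vf K) := by
    intro K hK
    have h := (hF K hK).2.2.2.2
    simp only [hvf, dif_pos h]
    exact ⟨h.choose_spec.1, h.choose_spec.2.1, h.choose_spec.2.2⟩
  have hadj_a : ∀ K ∈ F, G.Adj a (vf K) := fun K hK =>
    clique_adj (hF K hK).1.1 (hF K hK).2.2.1 (hvfK K hK).1 (Ne.symm (hvfK K hK).2.1)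
  have hmeet : ∀ K ∈ F, ∀ K' ∈ F, K ≠ K' → ∀ z, z ∈ K → z ∈ K' → z = a := by
    intro K hK K' hK' hne z hz hz'
    by_contra hza
    have hcard := bigMeet hred (hF K hK).1 (hF K hK).2.1 (hF K' hK').1 (hF K' hK').2.1 hne
    have hsub : ({a, z} : Finset V) ⊆ K ∩ K' := by
      intro t ht
      rcases Finset.mem_insert.mp ht with rfl | ht
      · exact Finset.mem_inter.mpr ⟨(hF K hK).2.2.1, (hF K' hK').2.2.1⟩
      · rw [Finset.mem_singleton.mp ht]
        exact Finset.mem_inter.mpr ⟨hz, hz'⟩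
    have h2 : 2 ≤ (K ∩ K').card := by
      have := Finset.card_le_card hsub
      rwa [Finset.card_pair (Ne.symm hza)] at this
    omega
  have hinjOn : Set.InjOn vf ↑F := by
    intro K hK K' hK' heq
    by_contra hne
    have h1 := (hvfK K (Finset.mem_coe.mp hK)).1
    have h2 : vf K ∈ K' := heq ▸ (hvfK K' (Finset.mem_coe.mp hK')).1
    exact (hvfK K (Finset.mem_coe.mp hK)).2.1
      (hmeet K (Finset.mem_coe.mp hK) K' (Finset.mem_coe.mp hK') hne _ h1 h2)
  set S := F.image vf with hSdef
  have hScard : S.card = F.card := Finset.card_image_of_injOn hinjOn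
  have hSprop : ∀ s ∈ S, G.Adj a s ∧ G.Adj b s ∧ s ∉ K0 := by
    intro s hs
    obtain ⟨K, hK, rfl⟩ := Finset.mem_image.mp hs
    refine ⟨hadj_a K hK, (hvfK K hK).2.2, ?_⟩
    intro hvK0
    have hKne : K ≠ K0 := by
      intro h
      exact (hF K hK).2.2.2.1 (h ▸ hb0)
    have hcard := bigMeet hred (hF K hK).1 (hF K hK).2.1 hK0 hK0b hKne
    have hsub : ({a, vf K} : Finset V) ⊆ K ∩ K0 := by
      intro t ht
      rcases Finset.mem_insert.mp ht with rfl | ht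
      · exact Finset.mem_inter.mpr ⟨(hF K hK).2.2.1, ha0⟩
      · rw [Finset.mem_singleton.mp ht]
        exact Finset.mem_inter.mpr ⟨(hvfK K hK).1, hvK0⟩
    have h2 : 2 ≤ (K ∩ K0).card := by
      have := Finset.card_le_card hsub
      rwa [Finset.card_pair (Ne.symm (hvfK K hK).2.1)] at this
    omega
  obtain ⟨w, hwinj, hw⟩ := exists_enum (n := k+1) (s := S) (by omega)
  have hZ : ∀ i : Fin (k+1), ∃ B : Finset V, B ⊆ K0 ∧
      (∀ y ∈ B, ¬ G.Adj (w i) y) ∧ k+1 ≤ B.card :=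
    fun i => nonnbrs hred hK0 hK0b (hSprop _ (hw i)).2.2
  choose Z hZsub hZn hZcard using hZ
  refine hred.2 a b hab (mk_nonedge_witness hwinj
    (fun i => (hSprop _ (hw i)).1) (fun i => (hSprop _ (hw i)).2.1) hZcard ?_ ?_ hZn ?_)
  · intro i z hz
    refine clique_adj hK0.1 ha0 (hZsub i hz) (fun h => ?_)
    exact hZn i z hz (h ▸ ((hSprop _ (hw i)).1).symm)
  · intro i z hz
    refine clique_adj hK0.1 hb0 (hZsub i hz) (fun h => ?_)
    exact hZn i z hz (h ▸ ((hSprop _ (hw i)).2.1).symm)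
  · intro i j z hz h
    exact (hSprop _ (hw i)).2.2 (h ▸ hZsub j hz)

lemma diamond_edited {Ep Em : Finset (Sym2 V)} (hsol : IsSolution G k Ep Em)
    {u v x y : V} (hd : IsDiamond G u v x y) :
    s(u,v) ∈ Em ∨ s(u,x) ∈ Em ∨ s(u,y) ∈ Em ∨ s(v,x) ∈ Em ∨ s(v,y) ∈ Em ∨
      s(x,y) ∈ Ep := by
  by_contra hcon
  push_neg at hcon
  obtain ⟨h1, h2, h3, h4, h5, h6⟩ := hcon
  obtain ⟨hne1, hne2, hne3, hne4, hne5, hne6, ha1, ha2, ha3, ha4, ha5, hna⟩ := hd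
  have hadj : ∀ p q : V, G.Adj p q → s(p,q) ∉ Em → (EditedGraph G Ep Em).Adj p q := by
    intro p q h hm
    rw [EditedGraph, SimpleGraph.fromEdgeSet_adj]
    exact ⟨⟨Or.inl (G.mem_edgeSet.mpr h), fun hc => hm (Finset.mem_coe.mp hc)⟩, h.ne⟩
  have hxy' : ¬ (EditedGraph G Ep Em).Adj x y := by
    rw [EditedGraph, SimpleGraph.fromEdgeSet_adj]
    rintro ⟨⟨hmem, -⟩, -⟩
    rcases hmem with hmem | hmem
    · exact hna (G.mem_edgeSet.mp hmem)
    · exact h6 (Finset.mem_coe.mp hmem)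
  exact hsol.2.2.2 u v x y ⟨hne1, hne2, hne3, hne4, hne5, hne6,
    hadj u v ha1 h1, hadj u x ha2 h2, hadj u y ha3 h3,
    hadj v x ha4 h4, hadj v y ha5 h5, hxy'⟩

lemma cover [DecidableEq V] (hred : Reduced G k) {Ep Em : Finset (Sym2 V)}
    (hsol : IsSolution G k Ep Em) {K : Finset V} (hT : TypeI G K)
    (hbig : 3*k+2 ≤ K.card) :
    ∃ a b : V, s(a,b) ∈ Em ∧ G.Adj a b ∧
      ((a ∈ K ∧ b ∈ K) ∨ (a ∈ K ∧ b ∉ K ∧ ∃ v ∈ K, v ≠ a ∧ G.Adj b v)) := by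
  classical
  obtain ⟨hK, K', hK', hKne, hint⟩ := hT
  obtain ⟨u, hu, v, hv, huv⟩ := Finset.one_lt_card.mp (by omega : 1 < (K ∩ K').card)
  have huK : u ∈ K := (Finset.mem_inter.mp hu).1
  have huK' : u ∈ K' := (Finset.mem_inter.mp hu).2
  have hvK : v ∈ K := (Finset.mem_inter.mp hv).1
  have hvK' : v ∈ K' := (Finset.mem_inter.mp hv).2
  have hnsub : ¬ K' ⊆ K := by
    intro hsub
    exact hKne (hK'.2 K hK.1 hsub)
  obtain ⟨x, hxK', hxK⟩ := Finset.not_subset.mp hnsub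
  obtain ⟨B, hBK, hBn, hBc⟩ := nonnbrs hred hK hbig hxK
  have hadjux : G.Adj u x := clique_adj hK'.1 huK' hxK' (fun h => hxK (h ▸ huK))
  have hadjvx : G.Adj v x := clique_adj hK'.1 hvK' hxK' (fun h => hxK (h ▸ hvK))
  have huvadj : G.Adj u v := clique_adj hK.1 huK hvK huv
  have hBprop : ∀ y ∈ B, y ≠ u ∧ y ≠ v ∧ y ≠ x := by
    intro y hy
    refine ⟨fun h => hBn y hy (h ▸ hadjux.symm), fun h => hBn y hy (h ▸ hadjvx.symm),
      fun h => hxK (h ▸ hBK hy)⟩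
  have hdia : ∀ y ∈ B, IsDiamond G u v x y := by
    intro y hy
    obtain ⟨hyu, hyv, hyx⟩ := hBprop y hy
    have hyK : y ∈ K := hBK hy
    exact ⟨huv, fun h => hxK (h ▸ huK), Ne.symm hyu, fun h => hxK (h ▸ hvK),
      Ne.symm hyv, Ne.symm hyx, huvadj, hadjux, clique_adj hK.1 huK hyK (Ne.symm hyu),
      hadjvx, clique_adj hK.1 hvK hyK (Ne.symm hyv), fun h => hBn y hy h⟩
  by_cases c1 : s(u,v) ∈ Em
  · exact ⟨u, v, c1, huvadj, Or.inl ⟨huK, hvK⟩⟩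
  by_cases c2 : s(u,x) ∈ Em
  · exact ⟨u, x, c2, hadjux, Or.inr ⟨huK, hxK, v, hvK, Ne.symm huv, hadjvx.symm⟩⟩
  by_cases c3 : s(v,x) ∈ Em
  · exact ⟨v, x, c3, hadjvx, Or.inr ⟨hvK, hxK, u, huK, huv, hadjux.symm⟩⟩
  exfalso
  set g : V → Sym2 V := fun y =>
    if s(u,y) ∈ Em then s(u,y) else if s(v,y) ∈ Em then s(v,y) else s(x,y) with hg
  have hgmem : ∀ y ∈ B, g y ∈ Ep ∪ Em := by
    intro y hy
    have hd := diamond_edited hsol (hdia y hy)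
    simp only [hg]
    by_cases h1 : s(u,y) ∈ Em
    · simp only [if_pos h1]
      exact Finset.mem_union_right _ h1
    by_cases h2 : s(v,y) ∈ Em
    · simp only [if_neg h1, if_pos h2]
      exact Finset.mem_union_right _ h2
    · simp only [if_neg h1, if_neg h2]
      rcases hd with h | h | h | h | h | h
      · exact absurd h c1
      · exact absurd h c2
      · exact absurd h h1
      · exact absurd h c3
      · exact absurd h h2
      · exact Finset.mem_union_left _ h
  have hshape : ∀ y ∈ B, ∃ α, (α = u ∨ α = v ∨ α = x) ∧ g y = s(α, y) := by
    intro y _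
    simp only [hg]
    by_cases h1 : s(u,y) ∈ Em
    · exact ⟨u, Or.inl rfl, by simp [h1]⟩
    by_cases h2 : s(v,y) ∈ Em
    · exact ⟨v, Or.inr (Or.inl rfl), by simp [h1, h2]⟩
    · exact ⟨x, Or.inr (Or.inr rfl), by simp [h1, h2]⟩
  have hinj : Set.InjOn g ↑B := by
    intro y hy y' hy' heq
    obtain ⟨α, hα, hαe⟩ := hshape y (Finset.mem_coe.mp hy)
    obtain ⟨β, hβ, hβe⟩ := hshape y' (Finset.mem_coe.mp hy')
    have heq2 : s(α, y) = s(β, y') := by rw [← hαe, ← hβe, heq]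
    rw [Sym2.eq_iff] at heq2
    rcases heq2 with ⟨-, h⟩ | ⟨h1, h2⟩
    · exact h
    · exfalso
      obtain ⟨n1, n2, n3⟩ := hBprop y (Finset.mem_coe.mp hy)
      rcases hβ with rfl | rfl | rfl
      · exact n1 h2
      · exact n2 h2
      · exact n3 h2
  have hc1 : B.card ≤ (Ep ∪ Em).card :=
    Finset.card_le_card_of_injOn g (fun y hy => hgmem y hy) hinj
  have hc2 : (Ep ∪ Em).card ≤ k :=
    le_trans (Finset.card_union_le _ _) hsol.2.2.1
  omega

end Stmt12Helpers

/-- a reduced yes-instance has at most `6k²` big type-I maximal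
cliques. -/
theorem stmt12 [Fintype V] [DecidableEq V] (G : SimpleGraph V) (k : ℕ)
    (hred : Reduced G k) (hyes : YesInstance G k) :
    {K : Finset V | TypeI G K ∧ 3 * k + 2 ≤ K.card}.ncard ≤ 6 * k ^ 2 := by
  classical
  obtain ⟨Ep, Em, hsol⟩ := hyes
  set Bf : Finset (Finset V) :=
    Finset.univ.filter (fun K => TypeI G K ∧ 3*k+2 ≤ K.card) with hBf
  have hset : {K : Finset V | TypeI G K ∧ 3 * k + 2 ≤ K.card} = ↑Bf := by
    ext K
    simp [hBf]
  rw [hset, Set.ncard_coe_finset]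
  set P : Sym2 V → Finset V → Prop := fun e K => ∃ a b : V, e = s(a,b) ∧ G.Adj a b ∧
      ((a ∈ K ∧ b ∈ K) ∨ (a ∈ K ∧ b ∉ K ∧ ∃ v ∈ K, v ≠ a ∧ G.Adj b v)) with hP
  set fib : Sym2 V → Finset (Finset V) :=
    fun e => Bf.filter (fun K => P e K) with hfib
  have hsub : Bf ⊆ Em.biUnion fib := by
    intro K hK
    have hK2 : TypeI G K ∧ 3*k+2 ≤ K.card := by
      have := Finset.mem_filter.mp hK
      exact this.2
    obtain ⟨a, b, hEm, hab, hor⟩ := cover hred hsol hK2.1 hK2.2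
    exact Finset.mem_biUnion.mpr ⟨s(a,b), hEm,
      Finset.mem_filter.mpr ⟨hK, a, b, rfl, hab, hor⟩⟩
  have hfiber : ∀ e ∈ Em, (fib e).card ≤ 6*k := by
    intro e he
    have hk1 : 1 ≤ k := by
      have h1 : 1 ≤ Em.card := Finset.card_pos.mpr ⟨e, he⟩
      have := hsol.2.2.1
      omega
    have heE : e ∈ G.edgeSet := hsol.2.1 e he
    obtain ⟨a, b, rfl⟩ : ∃ a b : V, e = s(a, b) :=
      Sym2.ind (fun a b => ⟨a, b, rfl⟩) e
    have hab : G.Adj a b := G.mem_edgeSet.mp heE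
    set In : Finset (Finset V) := Finset.univ.filter
      (fun K : Finset V => IsMaxClique G K ∧ 3*k+2 ≤ K.card ∧ a ∈ K ∧ b ∈ K) with hIn
    set F1 : Finset (Finset V) := Finset.univ.filter
      (fun K : Finset V => IsMaxClique G K ∧ 3*k+2 ≤ K.card ∧ a ∈ K ∧ b ∉ K ∧
        ∃ v ∈ K, v ≠ a ∧ G.Adj b v) with hF1
    set F2 : Finset (Finset V) := Finset.univ.filter
      (fun K : Finset V => IsMaxClique G K ∧ 3*k+2 ≤ K.card ∧ b ∈ K ∧ a ∉ K ∧
        ∃ v ∈ K, v ≠ b ∧ G.Adj a v) with hF2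
    have hsub2 : fib s(a,b) ⊆ In ∪ F1 ∪ F2 := by
      intro K hK
      obtain ⟨hKBf, a', b', heq, hab', hor⟩ := Finset.mem_filter.mp hK
      have hKmax : IsMaxClique G K ∧ 3*k+2 ≤ K.card := by
        have := (Finset.mem_filter.mp hKBf).2
        exact ⟨this.1.1, this.2⟩
      rw [Sym2.eq_iff] at heq
      rcases heq with ⟨ha', hb'⟩ | ⟨ha', hb'⟩
      · subst ha'; subst hb'
        rcases hor with ⟨h1, h2⟩ | ⟨h1, h2, h3⟩
        · exact Finset.mem_union_left _ (Finset.mem_union_left _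
            (Finset.mem_filter.mpr ⟨Finset.mem_univ _, hKmax.1, hKmax.2, h1, h2⟩))
        · exact Finset.mem_union_left _ (Finset.mem_union_right _
            (Finset.mem_filter.mpr ⟨Finset.mem_univ _, hKmax.1, hKmax.2, h1, h2, h3⟩))
      · subst ha'; subst hb'
        rcases hor with ⟨h1, h2⟩ | ⟨h1, h2, h3⟩
        · exact Finset.mem_union_left _ (Finset.mem_union_left _
            (Finset.mem_filter.mpr ⟨Finset.mem_univ _, hKmax.1, hKmax.2, h2, h1⟩))
        · exact Finset.mem_union_right _
            (Finset.mem_filter.mpr ⟨Finset.mem_univ _, hKmax.1, hKmax.2, h1, h2, h3⟩)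
    have hInle : In.card ≤ 1 := by
      rw [Finset.card_le_one]
      intro K hK K' hK'
      have h1 := (Finset.mem_filter.mp hK).2
      have h2 := (Finset.mem_filter.mp hK').2
      by_contra hne
      have hm := bigMeet hred h1.1 h1.2.1 h2.1 h2.2.1 hne
      have hsub3 : ({a, b} : Finset V) ⊆ K ∩ K' := by
        intro t ht
        rcases Finset.mem_insert.mp ht with rfl | ht
        · exact Finset.mem_inter.mpr ⟨h1.2.2.1, h2.2.2.1⟩
        · rw [Finset.mem_singleton.mp ht]
          exact Finset.mem_inter.mpr ⟨h1.2.2.2, h2.2.2.2⟩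
      have := Finset.card_le_card hsub3
      rw [Finset.card_pair hab.ne] at this
      omega
    have hF1p : ∀ K ∈ F1, IsMaxClique G K ∧ 3*k+2 ≤ K.card ∧ a ∈ K ∧ b ∉ K ∧
        ∃ v ∈ K, v ≠ a ∧ G.Adj b v := fun K hK => (Finset.mem_filter.mp hK).2
    have hF2p : ∀ K ∈ F2, IsMaxClique G K ∧ 3*k+2 ≤ K.card ∧ b ∈ K ∧ a ∉ K ∧
        ∃ v ∈ K, v ≠ b ∧ G.Adj a v := fun K hK => (Finset.mem_filter.mp hK).2
    have hcard3 : (fib s(a,b)).card ≤ In.card + F1.card + F2.card := by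
      calc (fib s(a,b)).card ≤ (In ∪ F1 ∪ F2).card := Finset.card_le_card hsub2
        _ ≤ (In ∪ F1).card + F2.card := Finset.card_union_le _ _
        _ ≤ In.card + F1.card + F2.card :=
            Nat.add_le_add_right (Finset.card_union_le _ _) _
    rcases Finset.eq_empty_or_nonempty In with hIe | ⟨K0, hK0⟩
    · have hI0 : In.card = 0 := by simp [hIe]
      have b1 := F_bound hred hab F1 hF1p
      have b2 := F_bound hred hab.symm F2 hF2p
      omega
    · have hK0p := (Finset.mem_filter.mp hK0).2
      have b1 := F_bound' hred hab hK0p.1 hK0p.2.1 hK0p.2.2.1 hK0p.2.2.2 F1 hF1p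
      have b2 := F_bound' hred hab.symm hK0p.1 hK0p.2.1 hK0p.2.2.2 hK0p.2.2.1 F2 hF2p
      omega
  calc Bf.card ≤ (Em.biUnion fib).card := Finset.card_le_card hsub
    _ ≤ ∑ e ∈ Em, (fib e).card := Finset.card_biUnion_le
    _ ≤ ∑ _e ∈ Em, 6*k := Finset.sum_le_sum hfiber
    _ = Em.card * (6*k) := by rw [Finset.sum_const, smul_eq_mul]
    _ ≤ k * (6*k) := Nat.mul_le_mul_right _ (by have := hsol.2.2.1; omega)
    _ ≤ 6 * k ^ 2 := by ring_nf; omega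
end
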